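/- arXiv:2004.06834 — 7 statements merged into one kernel-verified Lean document; each statement's English description precedes it below -/
import Mathlib

section
/- Let n ≥ 1 and N = 2^n. Define the Heisenberg–Weyl (Pauli) group HW_N = { i^κ · E(a,b) : κ ∈ {0,1,2,3}, a, b ∈ F₂ⁿ } and the Clifford group Cliff_N = { g ∈ U(N) : g M g† ∈ HW_N for every M ∈ HW_N }, where U(N) is the group of N × N unitary complex matrices. Then for every g ∈ Cliff_N there exists a binary symplectic matrix F ∈ Sp(2n, F₂) such that for all a, b ∈ F₂ⁿ there exists ε ∈ {+1, −1} with g E(a,b) g† = ε E(c,d), where the row vector [c,d] ∈ F₂^{2n} is given by [c,d] = [a,b] F. -/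
open Matrix

noncomputable section

/-- The Hermitian Pauli matrix `E(a,b)` on `n` qubits, with rows and columns
indexed by binary vectors. -/
def PauliE {n : ℕ} (a b : Fin n → ZMod 2) :
    Matrix (Fin n → ZMod 2) (Fin n → ZMod 2) ℂ :=
  Matrix.of fun u v =>
    Complex.I ^ ((∑ i, (a i).val * (b i).val) % 4) *
      (-1 : ℂ) ^ (∑ i, (v i).val * (b i).val) *
      (if u = v + a then (1 : ℂ) else 0)

/-- The symplectic form `Ω = [[0, I],[I, 0]]` over `F₂`. -/
def OmegaMat (n : ℕ) : Matrix (Fin n ⊕ Fin n) (Fin n ⊕ Fin n) (ZMod 2) :=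
  Matrix.fromBlocks 0 1 1 0

/-!
Write `E(a,b) = i^{a·b} X(a) Z(b)` with the shift `X(a) = [u = v + a]` and the diagonal sign
`Z(b) = diag((-1)^{v·b})`. The single relation `Z(b) X(c) = (-1)^{c·b} X(c) Z(b)` shows that
`E(x) E(y)` is a nonzero multiple of `E(x + y)` and that `E(x) E(y) = (-1)^{ω(x,y)} E(y) E(x)`
with `ω(x,y) = x Ω yᵀ`; moreover the `E(x)` are Hermitian and no two are proportional.
Conjugation by a unitary `g` is multiplicative and preserves Hermiticity, so `g E(x) g† = ±E(T x)`
for a map `T`. Comparing `g E(x) E(y) g†` computed in two ways, the product rule makes `T`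
additive, hence `x ↦ x F` for a matrix `F` over `F₂`, and the commutation rule gives
`ω(x F, y F) = ω(x, y)`, i.e. `F Ω Fᵀ = Ω`.
-/

lemma neg_one_pow_val_add (x y : ZMod 2) :
    (-1 : ℂ) ^ (x + y).val = (-1) ^ x.val * (-1) ^ y.val := by
  rw [ZMod.val_add, ← neg_one_pow_eq_pow_mod_two, pow_add]

lemma neg_one_pow_val_mul_self (x : ZMod 2) : (-1 : ℂ) ^ x.val * (-1) ^ x.val = 1 := by
  rw [← neg_one_pow_val_add, CharTwo.add_self_eq_zero, ZMod.val_zero, pow_zero]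

lemma neg_one_pow_val_injective : Function.Injective fun x : ZMod 2 => (-1 : ℂ) ^ x.val := by
  intro x y h
  fin_cases x <;> fin_cases y <;> norm_num [ZMod.val] at h <;> rfl

lemma neg_one_pow_eq_neg_one_pow_val_natCast (k : ℕ) :
    (-1 : ℂ) ^ k = (-1) ^ (k : ZMod 2).val := by
  rw [ZMod.val_natCast, ← neg_one_pow_eq_pow_mod_two]

lemma natCast_sum_val_mul_val {n : ℕ} (a b : Fin n → ZMod 2) :
    ((∑ i, (a i).val * (b i).val : ℕ) : ZMod 2) = a ⬝ᵥ b := by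
  simp [dotProduct]

lemma eq_add_iff_eq_add {ι : Type*} (u v a : ι → ZMod 2) : u = v + a ↔ v = u + a := by
  simp only [funext_iff, Pi.add_apply]
  exact forall_congr' fun i => (by decide : ∀ x y z : ZMod 2, x = y + z ↔ y = x + z) _ _ _

variable {n : ℕ}

def pauliX (a : Fin n → ZMod 2) : Matrix (Fin n → ZMod 2) (Fin n → ZMod 2) ℂ :=
  of fun u v => if u = v + a then 1 else 0

def pauliZ (b : Fin n → ZMod 2) : Matrix (Fin n → ZMod 2) (Fin n → ZMod 2) ℂ :=
  diagonal fun v => (-1) ^ (v ⬝ᵥ b).val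

lemma pauliX_mul_pauliX (a c : Fin n → ZMod 2) : pauliX a * pauliX c = pauliX (a + c) := by
  ext u w
  simp [pauliX, mul_apply, add_assoc, add_comm a c]

lemma pauliZ_mul_pauliZ (b d : Fin n → ZMod 2) : pauliZ b * pauliZ d = pauliZ (b + d) := by
  simp [pauliZ, dotProduct_add, neg_one_pow_val_add]

lemma pauliZ_mul_pauliX (b c : Fin n → ZMod 2) :
    pauliZ b * pauliX c = (-1 : ℂ) ^ (c ⬝ᵥ b).val • (pauliX c * pauliZ b) := by
  ext u v
  by_cases h : u = v + c
  · simp [pauliX, pauliZ, h, add_dotProduct, neg_one_pow_val_add, mul_comm]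
  · simp [pauliX, pauliZ, h]

lemma pauliX_conjTranspose (a : Fin n → ZMod 2) : (pauliX a)ᴴ = pauliX a := by
  ext u v
  simp [pauliX, eq_add_iff_eq_add v u]

lemma pauliZ_conjTranspose (b : Fin n → ZMod 2) : (pauliZ b)ᴴ = pauliZ b := by
  simp [pauliZ]

lemma PauliE_eq_smul (a b : Fin n → ZMod 2) :
    PauliE a b = Complex.I ^ (∑ i, (a i).val * (b i).val) • (pauliX a * pauliZ b) := by
  ext u v
  rw [PauliE, pauliX, pauliZ, of_apply, Matrix.smul_apply, mul_diagonal, of_apply,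
    ← Complex.I_pow_eq_pow_mod, neg_one_pow_eq_neg_one_pow_val_natCast, natCast_sum_val_mul_val,
    smul_eq_mul]
  ring

lemma PauliE_conjTranspose (a b : Fin n → ZMod 2) : (PauliE a b)ᴴ = PauliE a b := by
  set k := ∑ i, (a i).val * (b i).val
  have hphase : star (Complex.I ^ k) * (-1) ^ (a ⬝ᵥ b).val = Complex.I ^ k := by
    rw [star_pow, Complex.star_def, Complex.conj_I, neg_pow, ← natCast_sum_val_mul_val,
      ← neg_one_pow_eq_neg_one_pow_val_natCast, mul_right_comm, ← pow_add, ← two_mul, pow_mul,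
      neg_one_sq, one_pow, one_mul]
  rw [PauliE_eq_smul, conjTranspose_smul, conjTranspose_mul, pauliX_conjTranspose,
    pauliZ_conjTranspose, pauliZ_mul_pauliX, smul_smul, hphase]

lemma PauliE_mul_PauliE (a b c d : Fin n → ZMod 2) :
    PauliE a b * PauliE c d =
      (Complex.I ^ (∑ i, (a i).val * (b i).val) * Complex.I ^ (∑ i, (c i).val * (d i).val) *
        (-1) ^ (c ⬝ᵥ b).val) • (pauliX (a + c) * pauliZ (b + d)) := by
  rw [PauliE_eq_smul a b, PauliE_eq_smul c d, smul_mul_smul_comm, mul_assoc,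
    ← mul_assoc (pauliZ b), pauliZ_mul_pauliX, Matrix.smul_mul, Matrix.mul_smul, smul_smul,
    mul_assoc (pauliX c), ← mul_assoc (pauliX a), pauliX_mul_pauliX, pauliZ_mul_pauliZ]

lemma pauliX_mul_pauliZ_apply (a b u v : Fin n → ZMod 2) :
    (pauliX a * pauliZ b) u v = if u = v + a then (-1) ^ (v ⬝ᵥ b).val else 0 := by
  simp [pauliX, pauliZ, mul_diagonal]

lemma eq_of_smul_pauliX_mul_pauliZ_eq {a b c d : Fin n → ZMod 2} {α β : ℂ} (hα : α ≠ 0)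
    (h : α • (pauliX a * pauliZ b) = β • (pauliX c * pauliZ d)) : a = c ∧ b = d ∧ α = β := by
  have entry (v : Fin n → ZMod 2) :
      α * (-1) ^ (v ⬝ᵥ b).val = β * if v + a = v + c then (-1) ^ (v ⬝ᵥ d).val else 0 := by
    simpa [pauliX_mul_pauliZ_apply] using congrFun (congrFun h (v + a)) v
  have hac : a = c := by
    by_contra hne
    simpa [hne, hα] using entry 0
  subst hac
  have hαβ : α = β := by simpa using entry 0
  subst hαβ
  refine ⟨rfl, funext fun i => ?_, rfl⟩
  have hi := mul_left_cancel₀ hα (by simpa using entry (Pi.single i 1))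
  simpa using neg_one_pow_val_injective hi

lemma eq_of_smul_PauliE_eq {a b c d : Fin n → ZMod 2} {α β : ℂ} (hα : α ≠ 0)
    (h : α • PauliE a b = β • PauliE c d) : a = c ∧ b = d ∧ α = β := by
  rw [PauliE_eq_smul, PauliE_eq_smul, smul_smul, smul_smul] at h
  obtain ⟨rfl, rfl, hαβ⟩ :=
    eq_of_smul_pauliX_mul_pauliZ_eq (mul_ne_zero hα (pow_ne_zero _ Complex.I_ne_zero)) h
  exact ⟨rfl, rfl, mul_right_cancel₀ (pow_ne_zero _ Complex.I_ne_zero) hαβ⟩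

def pauli (x : Fin n ⊕ Fin n → ZMod 2) : Matrix (Fin n → ZMod 2) (Fin n → ZMod 2) ℂ :=
  PauliE (x ∘ Sum.inl) (x ∘ Sum.inr)

lemma dotProduct_OmegaMat_mulVec (x y : Fin n ⊕ Fin n → ZMod 2) :
    x ⬝ᵥ (OmegaMat n *ᵥ y) = (x ∘ Sum.inl) ⬝ᵥ (y ∘ Sum.inr) + (x ∘ Sum.inr) ⬝ᵥ (y ∘ Sum.inl) := by
  simp [OmegaMat, fromBlocks_mulVec, dotProduct, Fintype.sum_sum_type]

lemma pauli_conjTranspose (x : Fin n ⊕ Fin n → ZMod 2) : (pauli x)ᴴ = pauli x :=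
  PauliE_conjTranspose _ _

lemma eq_of_smul_pauli_eq {x y : Fin n ⊕ Fin n → ZMod 2} {α β : ℂ} (hα : α ≠ 0)
    (h : α • pauli x = β • pauli y) : x = y ∧ α = β := by
  obtain ⟨hl, hr, hαβ⟩ := eq_of_smul_PauliE_eq hα h
  exact ⟨funext fun | .inl i => congrFun hl i | .inr i => congrFun hr i, hαβ⟩

lemma pauli_ne_zero (x : Fin n ⊕ Fin n → ZMod 2) : pauli x ≠ 0 := by
  intro h
  have h10 : (1 : ℂ) • pauli x = (0 : ℂ) • pauli x := by rw [h, smul_zero, smul_zero]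
  exact one_ne_zero (eq_of_smul_pauli_eq one_ne_zero h10).2

lemma pauliX_mul_pauliZ_eq_smul (a b : Fin n → ZMod 2) :
    pauliX a * pauliZ b = (Complex.I ^ (∑ i, (a i).val * (b i).val))⁻¹ • PauliE a b := by
  rw [PauliE_eq_smul, inv_smul_smul₀ (pow_ne_zero _ Complex.I_ne_zero)]

lemma exists_pauli_mul_pauli_eq_smul (x y : Fin n ⊕ Fin n → ZMod 2) :
    ∃ c : ℂ, c ≠ 0 ∧ pauli x * pauli y = c • pauli (x + y) := by
  rw [pauli, pauli, PauliE_mul_PauliE, pauliX_mul_pauliZ_eq_smul, smul_smul]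
  exact ⟨_, by simp, rfl⟩

lemma pauli_mul_pauli_ne_zero (x y : Fin n ⊕ Fin n → ZMod 2) : pauli x * pauli y ≠ 0 := by
  obtain ⟨c, hc, h⟩ := exists_pauli_mul_pauli_eq_smul x y
  exact h ▸ smul_ne_zero hc (pauli_ne_zero _)

lemma pauli_mul_pauli_comm (x y : Fin n ⊕ Fin n → ZMod 2) :
    pauli x * pauli y = (-1 : ℂ) ^ (x ⬝ᵥ (OmegaMat n *ᵥ y)).val • (pauli y * pauli x) := by
  rw [pauli, pauli, PauliE_mul_PauliE, PauliE_mul_PauliE, smul_smul, add_comm (x ∘ Sum.inl),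
    add_comm (x ∘ Sum.inr), dotProduct_OmegaMat_mulVec, neg_one_pow_val_add,
    dotProduct_comm (x ∘ Sum.inr)]
  have hsq := neg_one_pow_val_mul_self (x ∘ Sum.inl ⬝ᵥ y ∘ Sum.inr)
  congr 1
  grind

lemma mul_mul_mul_of_mul_eq_one {M : Type*} [Monoid M] {g h : M} (hhg : h * g = 1) (x y : M) :
    g * (x * y) * h = g * x * h * (g * y * h) := by
  simp only [mul_assoc, ← mul_assoc h g, hhg, one_mul]

lemma I_pow_eq_one_or_neg_one_of_star_eq {k : ℕ} (h : star (Complex.I ^ k) = Complex.I ^ k) :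
    Complex.I ^ k = 1 ∨ Complex.I ^ k = -1 := by
  rw [star_pow, Complex.star_def, Complex.conj_I, neg_pow] at h
  have hk : Even k := (neg_one_pow_eq_one_iff_even (by norm_num)).mp
    (mul_right_cancel₀ (pow_ne_zero _ Complex.I_ne_zero) (h.trans (one_mul _).symm))
  obtain ⟨m, rfl⟩ := hk
  rw [← two_mul, pow_mul, Complex.I_sq]
  exact neg_one_pow_eq_or ℂ m

section Conjugation

variable {g : Matrix (Fin n → ZMod 2) (Fin n → ZMod 2) ℂ}

lemma I_pow_eq_one_or_neg_one_of_conj_pauli {x y : Fin n ⊕ Fin n → ZMod 2} {k : ℕ}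
    (h : g * pauli x * gᴴ = Complex.I ^ k • pauli y) :
    Complex.I ^ k = 1 ∨ Complex.I ^ k = -1 := by
  have hherm : (Complex.I ^ k • pauli y)ᴴ = Complex.I ^ k • pauli y := by
    rw [← h, conjTranspose_mul, conjTranspose_mul, conjTranspose_conjTranspose,
      pauli_conjTranspose, Matrix.mul_assoc]
  rw [conjTranspose_smul, pauli_conjTranspose] at hherm
  exact I_pow_eq_one_or_neg_one_of_star_eq
    (eq_of_smul_pauli_eq (star_ne_zero.mpr (pow_ne_zero _ Complex.I_ne_zero)) hherm).2

lemma exists_conj_pauli_eq_sign_smul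
    (hcliff : ∀ x, ∃ (k : ℕ) (y : Fin n ⊕ Fin n → ZMod 2),
      g * pauli x * gᴴ = Complex.I ^ k • pauli y) :
    ∃ (φ : (Fin n ⊕ Fin n → ZMod 2) → ℂ) (T : (Fin n ⊕ Fin n → ZMod 2) → Fin n ⊕ Fin n → ZMod 2),
      (∀ x, φ x = 1 ∨ φ x = -1) ∧ ∀ x, g * pauli x * gᴴ = φ x • pauli (T x) := by
  choose k T hT using hcliff
  exact ⟨fun x => Complex.I ^ k x, T, fun x => I_pow_eq_one_or_neg_one_of_conj_pauli (hT x), hT⟩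

variable {φ : (Fin n ⊕ Fin n → ZMod 2) → ℂ} {T : (Fin n ⊕ Fin n → ZMod 2) → Fin n ⊕ Fin n → ZMod 2}

lemma conj_pauli_mul_pauli (hg : gᴴ * g = 1)
    (hconj : ∀ x, g * pauli x * gᴴ = φ x • pauli (T x)) (x y : Fin n ⊕ Fin n → ZMod 2) :
    g * (pauli x * pauli y) * gᴴ = (φ x * φ y) • (pauli (T x) * pauli (T y)) := by
  rw [mul_mul_mul_of_mul_eq_one hg, hconj, hconj, Matrix.smul_mul, Matrix.mul_smul, smul_smul]

lemma map_add_of_conj_pauli (hg : gᴴ * g = 1) (hφ : ∀ x, φ x ≠ 0)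
    (hconj : ∀ x, g * pauli x * gᴴ = φ x • pauli (T x)) (x y : Fin n ⊕ Fin n → ZMod 2) :
    T (x + y) = T x + T y := by
  obtain ⟨c, hc, hxy⟩ := exists_pauli_mul_pauli_eq_smul x y
  obtain ⟨c', -, hTxy⟩ := exists_pauli_mul_pauli_eq_smul (T x) (T y)
  have h : (c * φ (x + y)) • pauli (T (x + y)) = (φ x * φ y * c') • pauli (T x + T y) := by
    rw [← smul_smul, ← hconj, ← Matrix.smul_mul, ← Matrix.mul_smul, ← hxy,
      conj_pauli_mul_pauli hg hconj, hTxy, smul_smul]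
  exact (eq_of_smul_pauli_eq (mul_ne_zero hc (hφ _)) h).1

lemma dotProduct_OmegaMat_mulVec_map_of_conj_pauli (hg : gᴴ * g = 1) (hφ : ∀ x, φ x ≠ 0)
    (hconj : ∀ x, g * pauli x * gᴴ = φ x • pauli (T x)) (x y : Fin n ⊕ Fin n → ZMod 2) :
    T x ⬝ᵥ (OmegaMat n *ᵥ T y) = x ⬝ᵥ (OmegaMat n *ᵥ y) := by
  have h := congrArg (fun M => g * M * gᴴ) (pauli_mul_pauli_comm x y)
  simp only [Matrix.smul_mul, Matrix.mul_smul, conj_pauli_mul_pauli hg hconj] at h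
  rw [pauli_mul_pauli_comm (T x), smul_smul, smul_smul] at h
  have h' := smul_left_injective ℂ (pauli_mul_pauli_ne_zero (T y) (T x)) h
  refine neg_one_pow_val_injective (mul_left_cancel₀ (mul_ne_zero (hφ x) (hφ y)) ?_)
  linear_combination h'

end Conjugation

lemma mul_mul_transpose_eq_of_dotProduct {ι κ R : Type*} [Fintype ι] [DecidableEq ι] [Fintype κ]
    [CommSemiring R] {F : Matrix ι κ R} {M : Matrix κ κ R} {N : Matrix ι ι R}
    (h : ∀ x y, (x ᵥ* F) ⬝ᵥ (M *ᵥ (y ᵥ* F)) = x ⬝ᵥ (N *ᵥ y)) : F * M * Fᵀ = N := by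
  ext i j
  have hij := h (Pi.single i 1) (Pi.single j 1)
  rw [single_one_vecMul, single_one_vecMul, single_one_dotProduct, mulVec_single_one,
    dotProduct_mulVec] at hij
  -- `(F * M * Fᵀ) i j` unfolds to `F.row i ᵥ* M ⬝ᵥ F.row j`
  exact hij

lemma exists_vecMul_eq {ι κ : Type*} [Fintype ι] [DecidableEq ι] {p : ℕ}
    (T : (ι → ZMod p) →+ (κ → ZMod p)) : ∃ F : Matrix ι κ (ZMod p), ∀ x, x ᵥ* F = T x :=
  ⟨(LinearMap.toMatrix' (T.toZModLinearMap p))ᵀ, fun x => by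
    rw [vecMul_transpose, LinearMap.toMatrix'_mulVec]; rfl⟩

theorem clifford_induces_symplectic_general (n : ℕ)
    (g : Matrix (Fin n → ZMod 2) (Fin n → ZMod 2) ℂ)
    (hg : g ∈ unitary (Matrix (Fin n → ZMod 2) (Fin n → ZMod 2) ℂ))
    (hcliff : ∀ (κ : Fin 4) (a b : Fin n → ZMod 2),
      ∃ (κ' : Fin 4) (a' b' : Fin n → ZMod 2),
        g * (Complex.I ^ (κ : ℕ) • PauliE a b) * gᴴ =
          Complex.I ^ (κ' : ℕ) • PauliE a' b') :
    ∃ F : Matrix (Fin n ⊕ Fin n) (Fin n ⊕ Fin n) (ZMod 2),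
      F * OmegaMat n * Fᵀ = OmegaMat n ∧
      ∀ a b : Fin n → ZMod 2, ∃ ε : ℂ, (ε = 1 ∨ ε = -1) ∧
        g * PauliE a b * gᴴ =
          ε • PauliE (fun i => Matrix.vecMul (Sum.elim a b) F (Sum.inl i))
            (fun i => Matrix.vecMul (Sum.elim a b) F (Sum.inr i)) := by
  obtain ⟨φ, T, hφ, hconj⟩ := exists_conj_pauli_eq_sign_smul (g := g) fun x => by
    obtain ⟨κ', a', b', h⟩ := hcliff 0 (x ∘ Sum.inl) (x ∘ Sum.inr)
    rw [Fin.val_zero, pow_zero, one_smul] at h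
    exact ⟨κ', Sum.elim a' b', h⟩
  have hg' : gᴴ * g = 1 := Unitary.star_mul_self_of_mem hg
  have hφ' (x : Fin n ⊕ Fin n → ZMod 2) : φ x ≠ 0 := by rcases hφ x with h | h <;> simp [h]
  obtain ⟨F, hF⟩ : ∃ F, ∀ x, x ᵥ* F = T x :=
    exists_vecMul_eq (AddMonoidHom.mk' T (map_add_of_conj_pauli hg' hφ' hconj))
  refine ⟨F, mul_mul_transpose_eq_of_dotProduct fun x y => ?_,
    fun a b => ⟨_, hφ (Sum.elim a b), ?_⟩⟩
  · rw [hF, hF, dotProduct_OmegaMat_mulVec_map_of_conj_pauli hg' hφ' hconj]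
  · have h := hconj (Sum.elim a b)
    rw [← hF] at h
    exact h

/-- Every Clifford group element `g` (a unitary normalizing the Heisenberg-Weyl
group `HW_N = {i^κ E(a,b)}`) induces a binary symplectic matrix `F` such that
`g E(a,b) g† = ± E([a,b]F)` for all `a, b ∈ F₂ⁿ`. -/
theorem clifford_induces_symplectic (n : ℕ) (hn : 1 ≤ n)
    (g : Matrix (Fin n → ZMod 2) (Fin n → ZMod 2) ℂ)
    (hg : g ∈ unitary (Matrix (Fin n → ZMod 2) (Fin n → ZMod 2) ℂ))
    (hcliff : ∀ (κ : Fin 4) (a b : Fin n → ZMod 2),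
      ∃ (κ' : Fin 4) (a' b' : Fin n → ZMod 2),
        g * (Complex.I ^ (κ : ℕ) • PauliE a b) * gᴴ =
          Complex.I ^ (κ' : ℕ) • PauliE a' b') :
    ∃ F : Matrix (Fin n ⊕ Fin n) (Fin n ⊕ Fin n) (ZMod 2),
      F * OmegaMat n * Fᵀ = OmegaMat n ∧
      ∀ a b : Fin n → ZMod 2, ∃ ε : ℂ, (ε = 1 ∨ ε = -1) ∧
        g * PauliE a b * gᴴ =
          ε • PauliE (fun i => Matrix.vecMul (Sum.elim a b) F (Sum.inl i))
            (fun i => Matrix.vecMul (Sum.elim a b) F (Sum.inr i)) :=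
  clifford_induces_symplectic_general n g hg hcliff

end
end

section
/- Let n ≥ 1 and let x, y ∈ F₂^{2n} be nonzero row vectors. Then x can be mapped to y by a product of at most two symplectic transvections: there exist h₁, h₂ ∈ F₂^{2n} (possibly zero, with F₀ = I_{2n}) such that x F_{h₁} F_{h₂} = y. -/
open Matrix

noncomputable section

/-- The symplectic transvection `F_h = I_{2n} + Ω hᵀ h` associated with `h ∈ F₂^{2n}`. -/
def sympTransvection (n : ℕ) (h : Fin n ⊕ Fin n → ZMod 2) :
    Matrix (Fin n ⊕ Fin n) (Fin n ⊕ Fin n) (ZMod 2) :=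
  1 + OmegaMat n * Matrix.of (fun i j => h i * h j)

/-- The symplectic inner product. -/
def sform {n : ℕ} (x y : Fin n ⊕ Fin n → ZMod 2) : ZMod 2 :=
  (x ∘ Sum.swap) ⬝ᵥ y

lemma vecMul_omega {n : ℕ} (x : Fin n ⊕ Fin n → ZMod 2) :
    Matrix.vecMul x (OmegaMat n) = x ∘ Sum.swap := by
  funext j
  cases j with
  | inl a =>
    simp [OmegaMat, Matrix.vecMul, dotProduct, Fintype.sum_sum_type,
      Matrix.fromBlocks, Matrix.one_apply, Finset.sum_ite_eq']
  | inr a =>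
    simp [OmegaMat, Matrix.vecMul, dotProduct, Fintype.sum_sum_type,
      Matrix.fromBlocks, Matrix.one_apply, Finset.sum_ite_eq']

lemma vecMul_transvection {n : ℕ} (x h : Fin n ⊕ Fin n → ZMod 2) :
    Matrix.vecMul x (sympTransvection n h) = x + sform x h • h := by
  unfold sympTransvection
  rw [Matrix.vecMul_add, Matrix.vecMul_one, ← Matrix.vecMul_vecMul, vecMul_omega]
  funext j
  simp only [Pi.add_apply, Matrix.vecMul, dotProduct, Matrix.of_apply,
    Pi.smul_apply, smul_eq_mul, sform]
  congr 1
  rw [Finset.sum_mul]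
  exact Finset.sum_congr rfl fun i _ => by ring

lemma sform_self {n : ℕ} (x : Fin n ⊕ Fin n → ZMod 2) : sform x x = 0 := by
  have : sform x x = (∑ a : Fin n, x (Sum.inr a) * x (Sum.inl a)) +
      ∑ a : Fin n, x (Sum.inl a) * x (Sum.inr a) := by
    simp [sform, dotProduct, Fintype.sum_sum_type]
  rw [this]
  rw [show (∑ a : Fin n, x (Sum.inr a) * x (Sum.inl a)) =
      ∑ a : Fin n, x (Sum.inl a) * x (Sum.inr a) from
    Finset.sum_congr rfl fun i _ => mul_comm _ _]
  exact CharTwo.add_self_eq_zero _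

lemma sform_comm {n : ℕ} (x y : Fin n ⊕ Fin n → ZMod 2) : sform x y = sform y x := by
  unfold sform dotProduct
  rw [← Equiv.sum_comp (Equiv.sumComm (Fin n) (Fin n))
    (fun i => (y ∘ Sum.swap) i * x i)]
  exact Finset.sum_congr rfl fun i _ => by
    cases i <;> simp [Equiv.sumComm, mul_comm]

lemma sform_add_right {n : ℕ} (x y z : Fin n ⊕ Fin n → ZMod 2) :
    sform x (y + z) = sform x y + sform x z := by
  simp [sform, dotProduct_add]

lemma sform_nondeg {n : ℕ} (x : Fin n ⊕ Fin n → ZMod 2) (hx : x ≠ 0) :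
    ∃ z, sform x z = 1 := by
  obtain ⟨k, hk⟩ : ∃ k, x k ≠ 0 := by
    by_contra h
    push_neg at h
    exact hx (funext fun k => h k)
  refine ⟨Pi.single (Sum.swap k) 1, ?_⟩
  have h1 : x k = 1 := by
    have := hk; revert this; generalize x k = a; revert a; decide
  simp only [sform, dotProduct, Pi.single_apply, Function.comp_apply,
    mul_ite, mul_one, mul_zero, Finset.sum_ite_eq', Finset.mem_univ, if_true]
  simpa using h1

/-- Any nonzero `x ∈ F₂^{2n}` can be mapped to any nonzero `y ∈ F₂^{2n}` by a
product of at most two symplectic transvections (one of them possibly `F₀ = I`). -/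
theorem two_transvections_suffice (n : ℕ) (hn : 1 ≤ n)
    (x y : Fin n ⊕ Fin n → ZMod 2) (hx : x ≠ 0) (hy : y ≠ 0) :
    ∃ h₁ h₂ : Fin n ⊕ Fin n → ZMod 2,
      Matrix.vecMul x (sympTransvection n h₁ * sympTransvection n h₂) = y := by
  have key : ∀ u v : Fin n ⊕ Fin n → ZMod 2, sform u v = 1 →
      Matrix.vecMul u (sympTransvection n (u + v)) = v := by
    intro u v huv
    rw [vecMul_transvection, sform_add_right, sform_self, zero_add, huv, one_smul]
    funext j
    simp only [Pi.add_apply]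
    rw [show u j + (u j + v j) = (u j + u j) + v j by ring, CharTwo.add_self_eq_zero,
      zero_add]
  have hone : Matrix.vecMul x (sympTransvection n 0) = x := by
    rw [vecMul_transvection]
    simp [sform]
  have not_one : ∀ a : ZMod 2, a ≠ 1 → a = 0 := by decide
  by_cases hxy : sform x y = 1
  · refine ⟨x + y, 0, ?_⟩
    rw [← Matrix.vecMul_vecMul, key x y hxy, vecMul_transvection]
    simp [sform]
  · by_cases hxeqy : x = y
    · refine ⟨0, 0, ?_⟩
      rw [← Matrix.vecMul_vecMul, hone, vecMul_transvection]
      simp [sform, hxeqy]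
    · -- find z with sform x z = 1 and sform y z = 1
      obtain ⟨z₁, hz₁⟩ := sform_nondeg x hx
      obtain ⟨z₂, hz₂⟩ := sform_nondeg y hy
      have hz : ∃ z, sform x z = 1 ∧ sform y z = 1 := by
        by_cases h1 : sform y z₁ = 1
        · exact ⟨z₁, hz₁, h1⟩
        · by_cases h2 : sform x z₂ = 1
          · exact ⟨z₂, h2, hz₂⟩
          · refine ⟨z₁ + z₂, ?_, ?_⟩
            · rw [sform_add_right, hz₁, not_one _ h2]; ring
            · rw [sform_add_right, not_one _ h1, hz₂]; ring
      obtain ⟨z, hxz, hyz⟩ := hz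
      refine ⟨x + z, z + y, ?_⟩
      rw [← Matrix.vecMul_vecMul, key x z hxz, key z y ?_]
      rw [sform_comm]; exact hyz

end
end

section
/- Let n ≥ 1, let 1 ≤ t ≤ 2n, and let x₁,…,x_t and y₁,…,y_t be row vectors in F₂^{2n} such that each of the families (x_i)_{i=1}^t and (y_i)_{i=1}^t is linearly independent and ⟨x_i, x_j⟩ₛ = ⟨y_i, y_j⟩ₛ for all 1 ≤ i, j ≤ t. Then there exist h₁,…,h_{2t} ∈ F₂^{2n} (some possibly zero) such that the matrix F = F_{h₁} F_{h₂} ⋯ F_{h_{2t}}, a product of at most 2t symplectic transvections and hence an element of Sp(2n, F₂), satisfies x_i F = y_i for all i = 1,…,t. -/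
open Matrix

noncomputable section

/-- The symplectic inner product `⟨x, y⟩ₛ = x Ω yᵀ` on `F₂^{2n}`. -/
def sympInner (n : ℕ) (x y : Fin n ⊕ Fin n → ZMod 2) : ZMod 2 :=
  ∑ k, x k * Matrix.mulVec (OmegaMat n) y k

/-! Induction on `t`. Suppose a product `P` of `2t` transvections sends `xᵢ ↦ yᵢ` for `i < t`.
As `P` is symplectic, `u = x_t P` and `v = y_t` both lie outside `W = span (yᵢ)_{i<t}` and pair
in the same way with every vector of `W`. Two transvections fixing `W` pointwise then send `u`
to `v`: if `⟨u, v⟩ₛ = 1`, `F_{u+v}` alone does it; otherwise `F_{u+w}` followed by `F_{w+v}`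
does, for any `w` with `⟨u, w⟩ₛ = ⟨v, w⟩ₛ = 1` that pairs with `W` as `v` does. Such a `w`
exists by nondegeneracy, once a linear form with these values is found; over `F₂` the only
obstruction would be `u + v ∈ W`, and then the value at `v` is forced to be
`⟨u + v, v⟩ₛ + 1 = 1`. -/

open LinearMap (BilinForm transvection)
open Module Submodule

theorem ZMod.eq_zero_or_eq_one (a : ZMod 2) : a = 0 ∨ a = 1 := by
  revert a
  decide

section ZModTwo

variable {V : Type*} [AddCommGroup V] [Module (ZMod 2) V]

theorem Submodule.add_mem_of_mem_sup_span_singleton {W : Submodule (ZMod 2) V} {u v : V}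
    (hv : v ∉ W) (hvu : v ∈ W ⊔ (ZMod 2) ∙ u) : u + v ∈ W := by
  obtain ⟨z, hz, y, hy, rfl⟩ := mem_sup.mp hvu
  obtain ⟨a, rfl⟩ := mem_span_singleton.mp hy
  obtain rfl | rfl := ZMod.eq_zero_or_eq_one a
  · rw [zero_smul, add_zero] at hv
    exact absurd hz hv
  · rwa [one_smul, add_left_comm, ZModModule.add_self, add_zero]

theorem Submodule.exists_dual_eqOn_apply_eq_one {W : Submodule (ZMod 2) V} {u v : V}
    (hu : u ∉ W) (hv : v ∉ W) (φ : Dual (ZMod 2) V) (hφ : φ (u + v) = 0) :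
    ∃ g : Dual (ZMod 2) V, Set.EqOn g φ W ∧ g u = 1 ∧ g v = 1 := by
  obtain ⟨g₁, hg₁W, hg₁u⟩ := LinearMap.exists_extend_of_notMem (φ ∘ₗ W.subtype) hu 1
  have hg₁ : Set.EqOn g₁ φ W := fun z hz => LinearMap.congr_fun hg₁W ⟨z, hz⟩
  by_cases hvu : v ∈ W ⊔ (ZMod 2) ∙ u
  · have huv := add_mem_of_mem_sup_span_singleton hv hvu
    refine ⟨g₁, hg₁, hg₁u, ?_⟩
    calc g₁ v = g₁ (u + v) - g₁ u := by rw [map_add, add_sub_cancel_left]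
      _ = 1 := by rw [hg₁ huv, hφ, hg₁u]; rfl
  · obtain ⟨g, hgW, hgv⟩ :=
      LinearMap.exists_extend_of_notMem (g₁ ∘ₗ (W ⊔ (ZMod 2) ∙ u).subtype) hvu 1
    have hg : Set.EqOn g g₁ ↑(W ⊔ (ZMod 2) ∙ u) := fun z hz => LinearMap.congr_fun hgW ⟨z, hz⟩
    refine ⟨g, fun z hz => (hg (mem_sup_left hz)).trans (hg₁ hz), ?_, hgv⟩
    rw [hg (mem_sup_right (mem_span_singleton_self u)), hg₁u]

end ZModTwo

theorem Matrix.toBilin'_mul_mul_transpose {R ι : Type*} [CommSemiring R] [Fintype ι]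
    [DecidableEq ι] (M P : Matrix ι ι R) (x y : ι → R) :
    (P * M * Pᵀ).toBilin' x y = M.toBilin' (x ᵥ* P) (y ᵥ* P) := by
  rw [← transpose_transpose P, ← Matrix.toBilin'_comp, transpose_transpose]
  simp only [BilinForm.comp_apply, toLin'_apply, mulVec_transpose, transpose_transpose]

theorem LinearIndependent.vecMul_of_isUnit {K ι m : Type*} [Field K] [Fintype m] [DecidableEq m]
    {x : ι → m → K} (hx : LinearIndependent K x) {P : Matrix m m K} (hP : IsUnit P) :
    LinearIndependent K fun i => x i ᵥ* P :=
  hx.map' (vecMulLinear P) (LinearMap.ker_eq_bot.mpr (vecMul_injective_iff_isUnit.mpr hP))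

theorem List.prod_ofFn_snoc {M α : Type*} [Monoid M] {m : ℕ} (f : α → M) (g : Fin m → α)
    (a : α) :
    (List.ofFn fun k => f (Fin.snoc (α := fun _ => α) g a k)).prod =
      (List.ofFn fun k => f (g k)).prod * f a := by
  rw [List.ofFn_succ', List.prod_concat]
  simp only [Fin.snoc_castSucc, Fin.snoc_last]

namespace LinearMap.BilinForm

section CommRing

variable {R V : Type*} [CommRing R] [AddCommGroup V] [Module R V] {B : BilinForm R V}

def symplecticTransvection (B : BilinForm R V) (h : V) : V →ₗ[R] V :=
  transvection (B.flip h) h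

theorem symplecticTransvection_apply (h x : V) :
    B.symplecticTransvection h x = x + B x h • h :=
  rfl

theorem symplecticTransvection_zero : B.symplecticTransvection 0 = LinearMap.id :=
  transvection.of_right_eq_zero _

theorem symplecticTransvection_apply_of_eq_zero {h x : V} (hx : B x h = 0) :
    B.symplecticTransvection h x = x := by
  rw [symplecticTransvection_apply, hx, zero_smul, add_zero]

theorem IsAlt.apply_symplecticTransvection (hB : B.IsAlt) (h x y : V) :
    B (B.symplecticTransvection h x) (B.symplecticTransvection h y) = B x y := by
  simp only [symplecticTransvection_apply, map_add, map_smul, LinearMap.add_apply,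
    LinearMap.smul_apply, smul_eq_mul, hB.self_eq_zero, ← hB.neg_eq h y]
  ring

end CommRing

section ZModTwo

variable {V : Type*} [AddCommGroup V] [Module (ZMod 2) V] {B : BilinForm (ZMod 2) V}

theorem IsAlt.symplecticTransvection_add_apply (hB : B.IsAlt) {u v : V} (huv : B u v = 1) :
    B.symplecticTransvection (u + v) u = v := by
  rw [symplecticTransvection_apply, map_add, hB.self_eq_zero, zero_add, huv, one_smul,
    ← add_assoc, ZModModule.add_self, zero_add]

theorem exists_apply_eq_one_of_notMem [FiniteDimensional (ZMod 2) V] (hB : B.IsAlt)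
    (hB' : B.Nondegenerate) {W : Submodule (ZMod 2) V} {u v : V} (hu : u ∉ W) (hv : v ∉ W)
    (huv : B u v = 0) : ∃ w, B u w = 1 ∧ B v w = 1 ∧ ∀ z ∈ W, B z w = B z v := by
  have hφ : B.flip v (u + v) = 0 := by
    rw [flip_apply, map_add, LinearMap.add_apply, huv, hB.self_eq_zero, add_zero]
  obtain ⟨g, hgW, hgu, hgv⟩ := exists_dual_eqOn_apply_eq_one hu hv (B.flip v) hφ
  set w := (B.flip.toDual hB'.flip).symm g
  have hw (y : V) : B y w = g y := apply_toDual_symm_apply (hB := hB'.flip) g y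
  exact ⟨w, by rw [hw, hgu], by rw [hw, hgv], fun z hz => by rw [hw, hgW hz, flip_apply]⟩

theorem exists_symplecticTransvection_comp_apply_eq [FiniteDimensional (ZMod 2) V]
    (hB : B.IsAlt) (hB' : B.Nondegenerate) {W : Submodule (ZMod 2) V} {u v : V} (hu : u ∉ W)
    (hv : v ∉ W) (hW : ∀ z ∈ W, B z u = B z v) :
    ∃ g₁ g₂ : V, B.symplecticTransvection g₂ (B.symplecticTransvection g₁ u) = v ∧
      ∀ z ∈ W, B.symplecticTransvection g₂ (B.symplecticTransvection g₁ z) = z := by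
  obtain huv | huv := ZMod.eq_zero_or_eq_one (B u v)
  · obtain ⟨w, huw, hvw, hwW⟩ := exists_apply_eq_one_of_notMem hB hB' hu hv huv
    have hwv : B w v = 1 := by rw [← hB.neg_eq, hvw]; rfl
    refine ⟨u + w, w + v, ?_, fun z hz => ?_⟩
    · rw [hB.symplecticTransvection_add_apply huw, hB.symplecticTransvection_add_apply hwv]
    · have hz₁ : B z (u + w) = 0 := by rw [map_add, hW z hz, hwW z hz, ZModModule.add_self]
      have hz₂ : B z (w + v) = 0 := by rw [map_add, hwW z hz, ZModModule.add_self]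
      rw [symplecticTransvection_apply_of_eq_zero hz₁, symplecticTransvection_apply_of_eq_zero hz₂]
  · refine ⟨u + v, 0, ?_, fun z hz => ?_⟩
    · rw [symplecticTransvection_zero, LinearMap.id_apply, hB.symplecticTransvection_add_apply huv]
    · have hz : B z (u + v) = 0 := by rw [map_add, hW z hz, ZModModule.add_self]
      rw [symplecticTransvection_zero, LinearMap.id_apply,
        symplecticTransvection_apply_of_eq_zero hz]

end ZModTwo

end LinearMap.BilinForm

section SympForm

variable {n : ℕ}

theorem OmegaMat_eq_J : OmegaMat n = J (Fin n) (ZMod 2) := by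
  rw [OmegaMat, J, ZModModule.neg_eq_self]

def sympForm (n : ℕ) : BilinForm (ZMod 2) (Fin n ⊕ Fin n → ZMod 2) :=
  (OmegaMat n).toBilin'

theorem sympForm_apply (x y : Fin n ⊕ Fin n → ZMod 2) : sympForm n x y = sympInner n x y :=
  toBilin'_apply' _ x y

theorem sympForm_isAlt : (sympForm n).IsAlt := by
  intro x
  rw [sympForm, toBilin'_apply', OmegaMat, fromBlocks_mulVec]
  simp only [dotProduct, Fintype.sum_sum_type, Sum.elim_inl, Sum.elim_inr, zero_mulVec,
    one_mulVec, zero_add, add_zero, Function.comp_apply, mul_comm (x (Sum.inr _))]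
  exact ZModModule.add_self _

theorem sympForm_nondegenerate : (sympForm n).Nondegenerate := by
  refine BilinForm.nondegenerate_toBilin'_of_det_ne_zero' _ ?_
  rw [OmegaMat_eq_J]
  exact (isUnit_det_J _ _).ne_zero

theorem vecMul_sympTransvection (x h : Fin n ⊕ Fin n → ZMod 2) :
    x ᵥ* sympTransvection n h = (sympForm n).symplecticTransvection h x := by
  have hh : of (fun i j => h i * h j) = vecMulVec h h := rfl
  rw [sympTransvection, vecMul_add, vecMul_one, ← vecMul_vecMul, hh, vecMul_vecMulVec,
    BilinForm.symplecticTransvection_apply, sympForm, toBilin'_apply', dotProduct_mulVec]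

theorem sympTransvection_mem_symplecticGroup (h : Fin n ⊕ Fin n → ZMod 2) :
    sympTransvection n h ∈ symplecticGroup (Fin n) (ZMod 2) := by
  rw [SymplecticGroup.mem_iff, ← OmegaMat_eq_J]
  refine toBilin'.injective (LinearMap.ext₂ fun x y => ?_)
  rw [toBilin'_mul_mul_transpose, vecMul_sympTransvection, vecMul_sympTransvection]
  exact sympForm_isAlt.apply_symplecticTransvection h x y

theorem prod_sympTransvection_mem_symplecticGroup {m : ℕ} (h : Fin m → Fin n ⊕ Fin n → ZMod 2) :
    (List.ofFn fun k => sympTransvection n (h k)).prod ∈ symplecticGroup (Fin n) (ZMod 2) :=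
  Submonoid.list_prod_mem _ (List.forall_mem_ofFn_iff.mpr fun k =>
    sympTransvection_mem_symplecticGroup (h k))

theorem sympForm_vecMul_vecMul {P : Matrix (Fin n ⊕ Fin n) (Fin n ⊕ Fin n) (ZMod 2)}
    (hP : P ∈ symplecticGroup (Fin n) (ZMod 2)) (x y : Fin n ⊕ Fin n → ZMod 2) :
    sympForm n (x ᵥ* P) (y ᵥ* P) = sympForm n x y := by
  rw [sympForm, ← toBilin'_mul_mul_transpose, OmegaMat_eq_J, SymplecticGroup.mem_iff.mp hP]

theorem exists_vecMul_prod_sympTransvection_eq {t : ℕ} (x y : Fin t → Fin n ⊕ Fin n → ZMod 2)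
    (hx : LinearIndependent (ZMod 2) x) (hy : LinearIndependent (ZMod 2) y)
    (hxy : ∀ i j, sympForm n (x i) (x j) = sympForm n (y i) (y j)) :
    ∃ h : Fin (2 * t) → Fin n ⊕ Fin n → ZMod 2,
      ∀ i, x i ᵥ* (List.ofFn fun k => sympTransvection n (h k)).prod = y i := by
  induction t with
  | zero => exact ⟨fun _ => 0, fun i => i.elim0⟩
  | succ t ih =>
    obtain ⟨hx₀, -⟩ := linearIndependent_finSucc'.mp hx
    obtain ⟨hy₀, hv⟩ := linearIndependent_finSucc'.mp hy
    obtain ⟨h₀, hh₀⟩ := ih (Fin.init x) (Fin.init y) hx₀ hy₀ fun i j => hxy _ _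
    set P := (List.ofFn fun k => sympTransvection n (h₀ k)).prod
    have hP : P ∈ symplecticGroup (Fin n) (ZMod 2) := prod_sympTransvection_mem_symplecticGroup h₀
    set W := span (ZMod 2) (Set.range (Fin.init y))
    have hu : x (Fin.last t) ᵥ* P ∉ W := by
      have hxP := linearIndependent_finSucc'.mp <|
        hx.vecMul_of_isUnit ((isUnit_iff_isUnit_det _).mpr (SymplecticGroup.symplectic_det hP))
      rw [show Fin.init (fun i => x i ᵥ* P) = Fin.init y from funext hh₀] at hxP
      exact hxP.2
    have hW : ∀ z ∈ W, sympForm n z (x (Fin.last t) ᵥ* P) = sympForm n z (y (Fin.last t)) := by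
      refine fun z hz => LinearMap.eqOn_span' (f := (sympForm n).flip (x (Fin.last t) ᵥ* P))
        (g := (sympForm n).flip (y (Fin.last t))) ?_ hz
      rintro _ ⟨j, rfl⟩
      calc sympForm n (Fin.init y j) (x (Fin.last t) ᵥ* P)
          = sympForm n (Fin.init x j ᵥ* P) (x (Fin.last t) ᵥ* P) := by rw [hh₀ j]
        _ = sympForm n (Fin.init y j) (y (Fin.last t)) := by
          rw [sympForm_vecMul_vecMul hP]
          exact hxy _ _
    obtain ⟨g₁, g₂, hg, hgW⟩ := BilinForm.exists_symplecticTransvection_comp_apply_eq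
      sympForm_isAlt sympForm_nondegenerate hu hv hW
    -- `2 * (t + 1)` unfolds to `2 * t + 1 + 1`, the shape `List.prod_ofFn_snoc` rewrites
    let h : Fin (2 * t + 1 + 1) → Fin n ⊕ Fin n → ZMod 2 := Fin.snoc (Fin.snoc h₀ g₁) g₂
    suffices ∀ i, x i ᵥ* (List.ofFn fun k => sympTransvection n (h k)).prod = y i from ⟨h, this⟩
    intro i
    rw [List.prod_ofFn_snoc, List.prod_ofFn_snoc, ← vecMul_vecMul, ← vecMul_vecMul,
      vecMul_sympTransvection, vecMul_sympTransvection]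
    refine Fin.lastCases hg (fun j => ?_) i
    rw [show x j.castSucc ᵥ* P = y j.castSucc from hh₀ j]
    exact hgW _ (subset_span ⟨j, rfl⟩)

end SympForm

theorem symplectic_system_solution_general (n t : ℕ)
    (x y : Fin t → Fin n ⊕ Fin n → ZMod 2)
    (hx : LinearIndependent (ZMod 2) x)
    (hy : LinearIndependent (ZMod 2) y)
    (hip : ∀ i j, sympInner n (x i) (x j) = sympInner n (y i) (y j)) :
    ∃ h : Fin (2 * t) → Fin n ⊕ Fin n → ZMod 2,
      (List.ofFn fun k => sympTransvection n (h k)).prod * OmegaMat n *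
          ((List.ofFn fun k => sympTransvection n (h k)).prod)ᵀ = OmegaMat n ∧
      ∀ i, Matrix.vecMul (x i) (List.ofFn fun k => sympTransvection n (h k)).prod = y i := by
  obtain ⟨h, hh⟩ := exists_vecMul_prod_sympTransvection_eq x y hx hy
    (by simpa only [sympForm_apply] using hip)
  refine ⟨h, ?_, hh⟩
  rw [OmegaMat_eq_J]
  exact SymplecticGroup.mem_iff.mp (prod_sympTransvection_mem_symplecticGroup h)

/-- Given linearly independent `x₁,…,x_t` and `y₁,…,y_t` in `F₂^{2n}` with matching
pairwise symplectic inner products, there is a product `F` of at most `2t` symplectic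
transvections (some possibly the identity `F₀`), hence `F ∈ Sp(2n, F₂)`, with
`xᵢ F = yᵢ` for all `i`. -/
theorem symplectic_system_solution (n t : ℕ) (hn : 1 ≤ n) (ht : 1 ≤ t) (ht2 : t ≤ 2 * n)
    (x y : Fin t → Fin n ⊕ Fin n → ZMod 2)
    (hx : LinearIndependent (ZMod 2) x)
    (hy : LinearIndependent (ZMod 2) y)
    (hip : ∀ i j, sympInner n (x i) (x j) = sympInner n (y i) (y j)) :
    ∃ h : Fin (2 * t) → Fin n ⊕ Fin n → ZMod 2,
      (List.ofFn fun k => sympTransvection n (h k)).prod * OmegaMat n *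
          ((List.ofFn fun k => sympTransvection n (h k)).prod)ᵀ = OmegaMat n ∧
      ∀ i, Matrix.vecMul (x i) (List.ofFn fun k => sympTransvection n (h k)).prod = y i :=
  symplectic_system_solution_general n t x y hx hy hip

end
end

section
/- Let n ≥ 1, N = 2^n, and ℓ ≥ 2. Let R ∈ ℤ^{n×n} be symmetric, and let a, b ∈ ℤ_{≥0}ⁿ have binary digit expansions a = a₀ + 2a₁ + 4a₂ + ⋯ and b = b₀ + 2b₁ + 4b₂ + ⋯ with a_k, b_k ∈ {0,1}ⁿ. Then τ_R^{(ℓ)} E(a,b) (τ_R^{(ℓ)})† = ξ_ℓ^{φ(R,a,b,ℓ)} · E(a₀, b₀ + a₀R) · τ_{R̃(R,a,ℓ)}^{(ℓ−1)}, where φ(R,a,b,ℓ) = (1 − 2^{ℓ−2}) a₀ R a₀ᵀ + 2^{ℓ−1}(a₀ b₁ᵀ + b₀ a₁ᵀ) (the exponent of ξ_ℓ taken mod 2^ℓ) and R̃(R,a,ℓ) = (1 + 2^{ℓ−2}) D_{a₀R} − (D_{ā₀} R D_{a₀} + D_{a₀} R D_{ā₀} + 2 D_{a₀ R D_{a₀}}),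 with D_x the diagonal matrix whose diagonal is the row vector x, and ā₀ = 𝟙 − a₀ where 𝟙 is the all-ones vector. -/
open Matrix

noncomputable section

/-- The 0/1 integer representative of a binary vector. -/
def intVec {n : ℕ} (v : Fin n → ZMod 2) : Fin n → ℤ := fun i => ((v i).val : ℤ)

/-- The generalized Hermitian Pauli matrix `E(a,b)` for integer row vectors `a, b ∈ ℤⁿ`. -/
def EIntPauli {n : ℕ} (a b : Fin n → ℤ) :
    Matrix (Fin n → ZMod 2) (Fin n → ZMod 2) ℂ :=
  Matrix.of fun u v =>
    Complex.I ^ (∑ i, a i * b i) *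
      (-1 : ℂ) ^ (∑ i, intVec v i * b i) *
      (if u = v + (fun i => ((a i : ZMod 2))) then (1 : ℂ) else 0)

/-- `ξ_ℓ = e^{2πi/2^ℓ}`. -/
def xi (ℓ : ℕ) : ℂ := Complex.exp (2 * (Real.pi : ℂ) * Complex.I / (2 ^ ℓ))

/-- The quadratic form diagonal (QFD) gate `τ_R^{(ℓ)}` with `(v,v)` entry `ξ_ℓ^{v R vᵀ}`. -/
def tauR {n : ℕ} (ℓ : ℕ) (R : Matrix (Fin n) (Fin n) ℤ) :
    Matrix (Fin n → ZMod 2) (Fin n → ZMod 2) ℂ :=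
  Matrix.diagonal fun v => xi ℓ ^ (∑ i, intVec v i * Matrix.mulVec R (intVec v) i)

/-- The 0-th binary digit vector of a nonnegative integer vector. -/
def dig0 {n : ℕ} (a : Fin n → ℕ) : Fin n → ℤ := fun i => ((a i % 2 : ℕ) : ℤ)

/-- The 1-st binary digit vector of a nonnegative integer vector. -/
def dig1 {n : ℕ} (a : Fin n → ℕ) : Fin n → ℤ := fun i => ((a i / 2 % 2 : ℕ) : ℤ)

/-- The global phase exponent `φ(R,a,b,ℓ)`. -/
def phiE {n : ℕ} (R : Matrix (Fin n) (Fin n) ℤ) (a b : Fin n → ℕ) (ℓ : ℕ) : ℤ :=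
  (1 - 2 ^ (ℓ - 2)) * (∑ i, dig0 a i * Matrix.mulVec R (dig0 a) i) +
    2 ^ (ℓ - 1) * ((∑ i, dig0 a i * dig1 b i) + ∑ i, dig0 b i * dig1 a i)

/-- The symmetric matrix `R̃(R,a,ℓ)` describing the residual QFD gate. -/
def Rtilde {n : ℕ} (R : Matrix (Fin n) (Fin n) ℤ) (a : Fin n → ℕ) (ℓ : ℕ) :
    Matrix (Fin n) (Fin n) ℤ :=
  (1 + 2 ^ (ℓ - 2) : ℤ) • Matrix.diagonal (Matrix.vecMul (dig0 a) R) -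
    (Matrix.diagonal (fun i => 1 - dig0 a i) * R * Matrix.diagonal (dig0 a) +
      Matrix.diagonal (dig0 a) * R * Matrix.diagonal (fun i => 1 - dig0 a i) +
      (2 : ℤ) • Matrix.diagonal (Matrix.vecMul (dig0 a) (R * Matrix.diagonal (dig0 a))))
/-!
Both sides are monomial matrices supported on the pairs `u = v + a₀`, so only their phases
have to be compared. Every factor is a power of `ξ_ℓ` (`i = ξ_ℓ^{2^{ℓ-2}}`, `-1 = ξ_ℓ^{2^{ℓ-1}}`,
`ξ_{ℓ-1} = ξ_ℓ^2`, `ξ_ℓ^† = ξ_ℓ^{-1}`), so the claim is a congruence of integer exponents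
modulo `2^ℓ`. If `c` is the 0/1 vector of `v`, then `u` has 0/1 vector `c + a₀ - 2 c a₀`;
expanding its quadratic form with the symmetry of `R`, and using
`a bᵀ ≡ a₀ b₀ᵀ + 2 (a₀ b₁ᵀ + b₀ a₁ᵀ) (mod 4)` and `c bᵀ ≡ c b₀ᵀ (mod 2)`, the two exponents
differ by `2^ℓ c R a₀ᵀ`.
-/

lemma xi_pow_two_pow_sub {k ℓ : ℕ} (h : k ≤ ℓ) : xi ℓ ^ 2 ^ (ℓ - k) = xi k := by
  rw [xi, xi, ← Complex.exp_nat_mul]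
  congr 1
  rw [show (2 : ℂ) ^ ℓ = 2 ^ (ℓ - k) * 2 ^ k by rw [← pow_add, Nat.sub_add_cancel h]]
  push_cast
  field_simp

lemma xi_zero : xi 0 = 1 := by simp [xi]

lemma xi_one : xi 1 = -1 := by
  rw [xi, ← Complex.exp_pi_mul_I]; congr 1; ring

lemma xi_two : xi 2 = Complex.I := by
  rw [xi, show 2 * (Real.pi : ℂ) * Complex.I / 2 ^ 2 = Real.pi / 2 * Complex.I by ring,
    Complex.exp_pi_div_two_mul_I]

lemma xi_ne_zero (ℓ : ℕ) : xi ℓ ≠ 0 := Complex.exp_ne_zero _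

lemma xi_zpow_eq_of_modEq {ℓ : ℕ} {s t : ℤ} (h : s ≡ t [ZMOD 2 ^ ℓ]) : xi ℓ ^ s = xi ℓ ^ t := by
  have hper : xi ℓ ^ ((2 : ℤ) ^ ℓ) = 1 := by
    have := xi_pow_two_pow_sub (Nat.zero_le ℓ)
    rw [Nat.sub_zero, xi_zero] at this
    exact_mod_cast this
  obtain ⟨k, hk⟩ := Int.modEq_iff_dvd.mp h
  rw [show t = s + 2 ^ ℓ * k by linarith, zpow_add₀ (xi_ne_zero ℓ), _root_.zpow_mul, hper,
    _root_.one_zpow, mul_one]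

lemma star_xi (ℓ : ℕ) : star (xi ℓ) = (xi ℓ)⁻¹ := by
  rw [xi, ← Complex.exp_neg, Complex.star_def, ← Complex.exp_conj]
  congr 1
  simp [Complex.conj_ofReal, map_ofNat]
  ring

lemma xi_zpow_eq_of_le {k ℓ : ℕ} (h : k ≤ ℓ) (m : ℤ) : xi k ^ m = xi ℓ ^ (2 ^ (ℓ - k) * m) := by
  rw [_root_.zpow_mul, ← xi_pow_two_pow_sub h]; norm_cast

section Binary

variable {n : ℕ}

lemma intVec_mul_self (v : Fin n → ZMod 2) (i : Fin n) : intVec v i * intVec v i = intVec v i := by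
  have : (v i).val < 2 := ZMod.val_lt (v i)
  unfold intVec
  interval_cases (v i).val <;> norm_num

lemma intCast_dig0 (a : Fin n → ℕ) :
    (fun i => ((dig0 a i : ℤ) : ZMod 2)) = fun i => ((a i : ℤ) : ZMod 2) := by
  funext i
  simp only [dig0, Int.cast_natCast, ZMod.natCast_mod]

lemma intVec_add_intCast (v : Fin n → ZMod 2) (a : Fin n → ℕ) :
    intVec (v + fun i => ((a i : ℤ) : ZMod 2)) = intVec v + dig0 a - 2 • (intVec v * dig0 a) := by
  funext i
  have hv : (v i).val < 2 := ZMod.val_lt (v i)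
  have ha : a i % 2 < 2 := Nat.mod_lt _ two_pos
  simp only [intVec, dig0, Pi.add_apply, Pi.sub_apply, Pi.mul_apply, Pi.smul_apply,
    Int.cast_natCast, ZMod.val_add, ZMod.val_natCast]
  generalize a i % 2 = y at ha ⊢
  interval_cases (v i).val <;> interval_cases y <;> norm_num

lemma natCast_mul_modEq_four (x y : ℕ) :
    (x * y : ℤ) ≡ (x % 2 : ℕ) * (y % 2 : ℕ) +
      2 * ((x % 2 : ℕ) * (y / 2 % 2 : ℕ) + (y % 2 : ℕ) * (x / 2 % 2 : ℕ)) [ZMOD 4] := by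
  have hx : (x : ℤ) ≡ (x % 2 : ℕ) + 2 * (x / 2 % 2 : ℕ) [ZMOD 4] := by
    unfold Int.ModEq; push_cast; omega
  have hy : (y : ℤ) ≡ (y % 2 : ℕ) + 2 * (y / 2 % 2 : ℕ) [ZMOD 4] := by
    unfold Int.ModEq; push_cast; omega
  calc (x * y : ℤ) ≡ ((x % 2 : ℕ) + 2 * (x / 2 % 2 : ℕ)) * ((y % 2 : ℕ) + 2 * (y / 2 % 2 : ℕ))
        [ZMOD 4] := hx.mul hy
    _ = (x % 2 : ℕ) * (y % 2 : ℕ) + 2 * ((x % 2 : ℕ) * (y / 2 % 2 : ℕ) +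
          (y % 2 : ℕ) * (x / 2 % 2 : ℕ)) + 4 * ((x / 2 % 2 : ℕ) * (y / 2 % 2 : ℕ)) := by ring
    _ ≡ _ [ZMOD 4] := by unfold Int.ModEq; rw [Int.add_mul_emod_self_left]

lemma dotProduct_natCast_modEq_four (a b : Fin n → ℕ) :
    (fun i => (a i : ℤ)) ⬝ᵥ (fun i => (b i : ℤ)) ≡
      dig0 a ⬝ᵥ dig0 b + 2 * (dig0 a ⬝ᵥ dig1 b + dig0 b ⬝ᵥ dig1 a) [ZMOD 4] := by
  simp only [dotProduct, ← Finset.sum_add_distrib, Finset.mul_sum]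
  exact Int.ModEq.sum fun i _ => natCast_mul_modEq_four (a i) (b i)

lemma dotProduct_natCast_modEq_two (c : Fin n → ℤ) (b : Fin n → ℕ) :
    c ⬝ᵥ (fun i => (b i : ℤ)) ≡ c ⬝ᵥ dig0 b [ZMOD 2] := by
  refine Int.ModEq.sum fun i _ => Int.ModEq.mul_left _ ?_
  unfold Int.ModEq dig0; push_cast; omega

end Binary

section QuadraticForm

variable {ι α : Type*} [Fintype ι] [CommRing α]

lemma dotProduct_mulVec_comm_of_isSymm {R : Matrix ι ι α} (hR : R.IsSymm) (x y : ι → α) :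
    x ⬝ᵥ R *ᵥ y = y ⬝ᵥ R *ᵥ x := by
  rw [dotProduct_mulVec, ← mulVec_transpose, hR.eq, dotProduct_comm]

lemma dotProduct_mulVec_add_sub_two_smul {R : Matrix ι ι α} (hR : R.IsSymm) (x y z : ι → α) :
    (x + y - 2 • z) ⬝ᵥ R *ᵥ (x + y - 2 • z) =
      x ⬝ᵥ R *ᵥ x + y ⬝ᵥ R *ᵥ y + 4 * (z ⬝ᵥ R *ᵥ z) + 2 * (x ⬝ᵥ R *ᵥ y)
        - 4 * (x ⬝ᵥ R *ᵥ z) - 4 * (y ⬝ᵥ R *ᵥ z) := by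
  simp only [mulVec_add, mulVec_sub, mulVec_smul, add_dotProduct, sub_dotProduct, dotProduct_add,
    dotProduct_sub, dotProduct_smul, smul_dotProduct]
  rw [dotProduct_mulVec_comm_of_isSymm hR y x, dotProduct_mulVec_comm_of_isSymm hR z x,
    dotProduct_mulVec_comm_of_isSymm hR z y]
  ring

variable [DecidableEq ι]

lemma dotProduct_diagonal_mulVec_of_mul_self {c : ι → α} (hc : ∀ i, c i * c i = c i)
    (w : ι → α) : c ⬝ᵥ diagonal w *ᵥ c = w ⬝ᵥ c := by
  refine Finset.sum_congr rfl fun i _ => ?_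
  rw [mulVec_diagonal, mul_left_comm, hc]

lemma dotProduct_diagonal_mul_mul_diagonal_mulVec (R : Matrix ι ι α) (w₁ w₂ x y : ι → α) :
    x ⬝ᵥ (diagonal w₁ * R * diagonal w₂) *ᵥ y = (w₁ * x) ⬝ᵥ R *ᵥ (w₂ * y) := by
  have h₁ : x ᵥ* diagonal w₁ = w₁ * x := funext fun j => by rw [vecMul_diagonal, mul_comm]; rfl
  have h₂ : diagonal w₂ *ᵥ y = w₂ * y := funext fun j => mulVec_diagonal w₂ y j
  simp only [← mulVec_mulVec]
  rw [dotProduct_mulVec x (diagonal w₁), h₁, h₂]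

end QuadraticForm

lemma dotProduct_Rtilde_mulVec {n : ℕ} {R : Matrix (Fin n) (Fin n) ℤ} (hR : R.IsSymm)
    (a : Fin n → ℕ) (ℓ : ℕ) {c : Fin n → ℤ} (hc : ∀ i, c i * c i = c i) :
    c ⬝ᵥ Rtilde R a ℓ *ᵥ c =
      (1 + 2 ^ (ℓ - 2)) * (c ⬝ᵥ R *ᵥ dig0 a) - 2 * (c ⬝ᵥ R *ᵥ (c * dig0 a))
        + 2 * ((c * dig0 a) ⬝ᵥ R *ᵥ (c * dig0 a)) - 2 * (dig0 a ⬝ᵥ R *ᵥ (c * dig0 a)) := by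
  have hcompl : (fun i => 1 - dig0 a i) * c = c - c * dig0 a := by
    funext i; simp only [Pi.mul_apply, Pi.sub_apply]; ring
  have hdiag : diagonal (dig0 a) *ᵥ c = c * dig0 a :=
    funext fun i => by rw [mulVec_diagonal, mul_comm]; rfl
  rw [Rtilde, sub_mulVec, add_mulVec, add_mulVec, smul_mulVec, smul_mulVec, dotProduct_sub,
    dotProduct_add, dotProduct_add, dotProduct_smul, dotProduct_smul,
    dotProduct_diagonal_mulVec_of_mul_self hc, dotProduct_diagonal_mulVec_of_mul_self hc,
    dotProduct_diagonal_mul_mul_diagonal_mulVec, dotProduct_diagonal_mul_mul_diagonal_mulVec,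
    hcompl, mul_comm (dig0 a) c, dotProduct_comm, ← dotProduct_mulVec, dotProduct_comm,
    ← dotProduct_mulVec, ← mulVec_mulVec, hdiag]
  simp only [mulVec_sub, dotProduct_sub, sub_dotProduct, smul_eq_mul]
  rw [dotProduct_mulVec_comm_of_isSymm hR (dig0 a) c,
    dotProduct_mulVec_comm_of_isSymm hR (c * dig0 a) c]
  ring

section Entries

variable {n : ℕ}

lemma EIntPauli_apply_eq_xi_zpow {ℓ : ℕ} (hℓ : 2 ≤ ℓ) (a b : Fin n → ℤ) (u v : Fin n → ZMod 2) :
    EIntPauli a b u v = if u = v + (fun i => (a i : ZMod 2)) then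
      xi ℓ ^ (2 ^ (ℓ - 2) * (a ⬝ᵥ b) + 2 ^ (ℓ - 1) * (intVec v ⬝ᵥ b)) else 0 := by
  rw [EIntPauli, of_apply, ← xi_two, ← xi_one, xi_zpow_eq_of_le hℓ,
    xi_zpow_eq_of_le (by omega : 1 ≤ ℓ), zpow_add₀ (xi_ne_zero ℓ)]
  split_ifs
  · rw [mul_one]; rfl
  · rw [mul_zero]

lemma conjTranspose_tauR (ℓ : ℕ) (R : Matrix (Fin n) (Fin n) ℤ) :
    (tauR ℓ R)ᴴ = diagonal fun v => xi ℓ ^ (-(intVec v ⬝ᵥ R *ᵥ intVec v)) := by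
  rw [tauR, diagonal_conjTranspose]
  congr 1
  funext v
  rw [Pi.star_apply, star_zpow₀, star_xi, _root_.inv_zpow', dotProduct]

lemma tauR_sub_one {ℓ : ℕ} (hℓ : 1 ≤ ℓ) (R : Matrix (Fin n) (Fin n) ℤ) :
    tauR (ℓ - 1) R = diagonal fun v => xi ℓ ^ (2 * (intVec v ⬝ᵥ R *ᵥ intVec v)) := by
  rw [tauR]
  congr 1
  funext v
  rw [xi_zpow_eq_of_le (Nat.sub_le ℓ 1), Nat.sub_sub_self hℓ, pow_one, dotProduct]

end Entries

lemma qfd_conjugation_exponent_modEq {n ℓ : ℕ} (hℓ : 2 ≤ ℓ) {R : Matrix (Fin n) (Fin n) ℤ}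
    (hR : R.IsSymm) (a b : Fin n → ℕ) (v : Fin n → ZMod 2) :
    intVec (v + fun i => ((a i : ℤ) : ZMod 2)) ⬝ᵥ
          R *ᵥ intVec (v + fun i => ((a i : ℤ) : ZMod 2)) +
        (2 ^ (ℓ - 2) * ((fun i => (a i : ℤ)) ⬝ᵥ fun i => (b i : ℤ)) +
          2 ^ (ℓ - 1) * (intVec v ⬝ᵥ fun i => (b i : ℤ))) + -(intVec v ⬝ᵥ R *ᵥ intVec v) ≡
      phiE R a b ℓ + (2 ^ (ℓ - 2) * (dig0 a ⬝ᵥ (dig0 b + dig0 a ᵥ* R)) +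
          2 ^ (ℓ - 1) * (intVec v ⬝ᵥ (dig0 b + dig0 a ᵥ* R)) +
        2 * (intVec v ⬝ᵥ Rtilde R a ℓ *ᵥ intVec v)) [ZMOD 2 ^ ℓ] := by
  set c := intVec v
  set α := dig0 a
  obtain ⟨s, hs⟩ := Int.modEq_iff_dvd.mp (dotProduct_natCast_modEq_four a b)
  obtain ⟨t, ht⟩ := Int.modEq_iff_dvd.mp (dotProduct_natCast_modEq_two c b)
  have hφ : phiE R a b ℓ = (1 - 2 ^ (ℓ - 2)) * (α ⬝ᵥ R *ᵥ α) +
      2 ^ (ℓ - 1) * (α ⬝ᵥ dig1 b + dig0 b ⬝ᵥ dig1 a) := rfl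
  have hα : α ⬝ᵥ (dig0 b + α ᵥ* R) = α ⬝ᵥ dig0 b + α ⬝ᵥ R *ᵥ α := by
    rw [dotProduct_add, dotProduct_comm α (α ᵥ* R), ← dotProduct_mulVec]
  have hc : c ⬝ᵥ (dig0 b + α ᵥ* R) = c ⬝ᵥ dig0 b + c ⬝ᵥ R *ᵥ α := by
    rw [dotProduct_add, dotProduct_comm c (α ᵥ* R), ← dotProduct_mulVec,
      dotProduct_mulVec_comm_of_isSymm hR]
  have hp₁ : (2 : ℤ) ^ (ℓ - 1) = 2 * 2 ^ (ℓ - 2) := by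
    rw [← pow_succ']; congr 1; omega
  have hp₀ : (2 : ℤ) ^ ℓ = 4 * 2 ^ (ℓ - 2) := by
    rw [show (4 : ℤ) = 2 ^ 2 by norm_num, ← pow_add]; congr 1; omega
  rw [intVec_add_intCast, dotProduct_mulVec_add_sub_two_smul hR,
    dotProduct_Rtilde_mulVec hR a ℓ (intVec_mul_self v), hφ, hα, hc]
  refine Int.modEq_iff_dvd.mpr ⟨c ⬝ᵥ R *ᵥ α + s + t, ?_⟩
  rw [hp₀, hp₁]
  linear_combination 2 ^ (ℓ - 2) * hs + 2 * 2 ^ (ℓ - 2) * ht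

theorem qfd_conjugation_general (n ℓ : ℕ) (hℓ : 2 ≤ ℓ)
    (R : Matrix (Fin n) (Fin n) ℤ) (hR : R.IsSymm) (a b : Fin n → ℕ) :
    tauR ℓ R * EIntPauli (fun i => (a i : ℤ)) (fun i => (b i : ℤ)) * (tauR ℓ R)ᴴ =
      xi ℓ ^ phiE R a b ℓ •
        (EIntPauli (dig0 a) (dig0 b + Matrix.vecMul (dig0 a) R) *
          tauR (ℓ - 1) (Rtilde R a ℓ)) := by
  ext u v
  rw [conjTranspose_tauR, tauR_sub_one (by omega), tauR]
  simp only [mul_diagonal, diagonal_mul, Matrix.smul_apply, smul_eq_mul,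
    EIntPauli_apply_eq_xi_zpow hℓ, intCast_dig0]
  split_ifs with huv
  · subst huv
    simp only [← zpow_add₀ (xi_ne_zero ℓ)]
    exact xi_zpow_eq_of_modEq (qfd_conjugation_exponent_modEq hℓ hR a b v)
  · simp

/-- Action of a QFD gate on a Pauli matrix:
`τ_R^{(ℓ)} E(a,b) (τ_R^{(ℓ)})† = ξ_ℓ^{φ(R,a,b,ℓ)} E(a₀, b₀ + a₀R) τ_{R̃(R,a,ℓ)}^{(ℓ−1)}`. -/
theorem qfd_conjugation (n ℓ : ℕ) (hn : 1 ≤ n) (hℓ : 2 ≤ ℓ)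
    (R : Matrix (Fin n) (Fin n) ℤ) (hR : R.IsSymm) (a b : Fin n → ℕ) :
    tauR ℓ R * EIntPauli (fun i => (a i : ℤ)) (fun i => (b i : ℤ)) * (tauR ℓ R)ᴴ =
      xi ℓ ^ phiE R a b ℓ •
        (EIntPauli (dig0 a) (dig0 b + Matrix.vecMul (dig0 a) R) *
          tauR (ℓ - 1) (Rtilde R a ℓ)) :=
  qfd_conjugation_general n ℓ hℓ R hR a b

end
end

section
/- Fix n ≥ 1 and N = 2^n. Define the Clifford hierarchy on n qubits by C^{(1)} = { i^κ · E(a,b) : κ ∈ {0,1,2,3}, a, b ∈ F₂ⁿ } and, recursively for ℓ ≥ 2, C^{(ℓ)} = { U ∈ U(N) : U E(a,b) U† ∈ C^{(ℓ−1)} for all a, b ∈ F₂ⁿ }, where U(N) is the group of N × N unitary matrices. Then for every ℓ ≥ 1 and every symmetric matrix R ∈ ℤ^{n×n}, the QFD gate τ_R^{(ℓ)} belongs to the ℓ-th level C^{(ℓ)} of the Clifford hierarchy. -/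
open Matrix

noncomputable section

/-- The Clifford hierarchy: level 1 is the Heisenberg-Weyl (Pauli) group, and
level `ℓ ≥ 2` consists of the unitaries mapping Paulis into level `ℓ − 1` under
conjugation. -/
def CliffLevel (n : ℕ) : ℕ → Set (Matrix (Fin n → ZMod 2) (Fin n → ZMod 2) ℂ)
  | 0 => ∅
  | 1 => {M | ∃ κ : Fin 4, ∃ a b : Fin n → ZMod 2, M = Complex.I ^ (κ : ℕ) • PauliE a b}
  | ℓ + 2 => {U | U ∈ unitary (Matrix (Fin n → ZMod 2) (Fin n → ZMod 2) ℂ) ∧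
      ∀ a b : Fin n → ZMod 2, U * PauliE a b * Uᴴ ∈ CliffLevel n (ℓ + 1)}

/-!
All matrices involved are translations `v ↦ v + a` composed with diagonal matrices. Paulis, and
QFD gates of level `k + 1` composed with translations, are such matrices with diagonal
`ξ_{k+2}^f`, where `f = m + 2 vSvᵀ` for a symmetric integer `S`. Conjugating a Pauli by such a
matrix of level `k + 2` yields one of level `k + 1`, because the exponent picks up
`f(v + a') - f(v)`, which is twice an exponent of the same shape:
`(v + a)S(v + a)ᵀ = vSvᵀ + aSaᵀ + 2 v S_a vᵀ` on 0/1 vectors. At level 1 these matrices are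
powers of `i` times Paulis, since `vSvᵀ ≡ ∑ S_ii v_i (mod 2)` for symmetric `S`.
-/

namespace Matrix

variable {ι R : Type*} [AddCommGroup ι] [DecidableEq ι]

def shiftDiagonal [Zero R] (a : ι) (d : ι → R) : Matrix ι ι R :=
  of fun u v => if u = v + a then d v else 0

section Semiring

variable [Semiring R]

lemma shiftDiagonal_zero (d : ι → R) : shiftDiagonal 0 d = diagonal d := by
  ext u v
  by_cases h : u = v <;> simp [shiftDiagonal, h]

lemma smul_shiftDiagonal (c : R) (a : ι) (d : ι → R) :
    c • shiftDiagonal a d = shiftDiagonal a fun v => c * d v := by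
  ext u v
  simp [shiftDiagonal]

lemma shiftDiagonal_mul_shiftDiagonal [Fintype ι] (a b : ι) (d e : ι → R) :
    shiftDiagonal a d * shiftDiagonal b e = shiftDiagonal (a + b) fun v => d (v + b) * e v := by
  ext u v
  rw [mul_apply, Finset.sum_eq_single (v + b) (fun w _ hw => by simp [shiftDiagonal, hw])
    (by simp)]
  simp [shiftDiagonal, add_assoc, add_comm b a]

end Semiring

section StarRing

variable [CommRing R] [StarRing R]

lemma conjTranspose_shiftDiagonal (a : ι) (d : ι → R) :
    (shiftDiagonal a d)ᴴ = shiftDiagonal (-a) fun v => star (d (v - a)) := by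
  ext u v
  simp only [conjTranspose_apply, shiftDiagonal, of_apply, ← sub_eq_add_neg]
  by_cases h : u = v - a
  · simp [h]
  · have h' : v ≠ u + a := fun hv => h (by rw [hv, add_sub_cancel_right])
    simp [h, h']

variable [Fintype ι]

lemma shiftDiagonal_mem_unitary {a : ι} {d : ι → R} (hd : ∀ v, star (d v) * d v = 1) :
    shiftDiagonal a d ∈ unitary (Matrix ι ι R) := by
  rw [← unitaryGroup, mem_unitaryGroup_iff', star_eq_conjTranspose, conjTranspose_shiftDiagonal,
    shiftDiagonal_mul_shiftDiagonal, neg_add_cancel, shiftDiagonal_zero]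
  simp_rw [add_sub_cancel_right, hd, diagonal_one]

lemma shiftDiagonal_mul_mul_conjTranspose (a b : ι) (d e : ι → R) :
    shiftDiagonal a d * shiftDiagonal b e * (shiftDiagonal a d)ᴴ =
      shiftDiagonal b fun v => d (v - a + b) * e (v - a) * star (d (v - a)) := by
  rw [conjTranspose_shiftDiagonal, shiftDiagonal_mul_shiftDiagonal,
    shiftDiagonal_mul_shiftDiagonal, show a + b + -a = b by abel]
  simp_rw [← sub_eq_add_neg]

end StarRing

end Matrix

lemma Matrix.IsSymm.add_dotProduct_mulVec_add {ι R : Type*} [Fintype ι] [CommSemiring R]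
    {S : Matrix ι ι R} (hS : S.IsSymm) (x y : ι → R) :
    (x + y) ⬝ᵥ S *ᵥ (x + y) = x ⬝ᵥ S *ᵥ x + 2 * (x ⬝ᵥ S *ᵥ y) + y ⬝ᵥ S *ᵥ y := by
  have hyx : y ⬝ᵥ S *ᵥ x = x ⬝ᵥ S *ᵥ y := by
    rw [dotProduct_mulVec, dotProduct_comm, ← mulVec_transpose, hS.eq]
  simp only [mulVec_add, dotProduct_add, add_dotProduct, hyx]
  ring

lemma Matrix.IsSymm.exists_dotProduct_mulVec_self_eq {ι R : Type*} [Fintype ι] [LinearOrder ι]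
    [CommSemiring R] {S : Matrix ι ι R} (hS : S.IsSymm) (x : ι → R) :
    ∃ y, x ⬝ᵥ S *ᵥ x = 2 * y + ∑ i, S i i * (x i * x i) := by
  let L : Matrix ι ι R := of fun i j => if j < i then S i j else 0
  have hL : S = L + Lᵀ + diagonal fun i => S i i := by
    ext i j
    rcases lt_trichotomy i j with h | rfl | h
    · simp [L, h, h.ne, h.not_gt, hS.apply]
    · simp [L]
    · simp [L, h, h.ne', h.not_gt]
  refine ⟨x ⬝ᵥ L *ᵥ x, ?_⟩
  conv_lhs => rw [hL]
  rw [add_mulVec, add_mulVec, dotProduct_add, dotProduct_add, mulVec_transpose,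
    dotProduct_comm x (x ᵥ* L), ← dotProduct_mulVec, two_mul]
  congr 1
  refine Finset.sum_congr rfl fun i _ => ?_
  rw [mulVec_diagonal]
  ring

lemma xi_add_zpow_two_pow_mul (ℓ k : ℕ) (z : ℤ) : xi (ℓ + k) ^ (2 ^ k * z) = xi ℓ ^ z := by
  rw [_root_.zpow_mul, show (2 : ℤ) ^ k = ((2 ^ k : ℕ) : ℤ) by push_cast; rfl, zpow_natCast, xi,
    xi, ← Complex.exp_nat_mul]
  congr 2
  push_cast
  field_simp
  ring

lemma xi_succ_zpow_two_mul (ℓ : ℕ) (z : ℤ) : xi (ℓ + 1) ^ (2 * z) = xi ℓ ^ z := by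
  simpa using xi_add_zpow_two_pow_mul ℓ 1 z

lemma star_xi_zpow (ℓ : ℕ) (z : ℤ) : star (xi ℓ ^ z) = xi ℓ ^ (-z) := by
  have hstar : star (xi ℓ) = (xi ℓ)⁻¹ := by
    rw [xi, ← Complex.exp_neg, Complex.star_def, ← Complex.exp_conj]
    congr 1
    simp [map_div₀, Complex.conj_ofReal, map_ofNat]
    ring
  rw [star_zpow₀, hstar, _root_.inv_zpow, _root_.zpow_neg]

lemma star_xi_zpow_mul_self (ℓ : ℕ) (z : ℤ) : star (xi ℓ ^ z) * xi ℓ ^ z = 1 := by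
  rw [star_xi_zpow, ← zpow_add₀ (xi_ne_zero ℓ), neg_add_cancel, zpow_zero]

lemma neg_one_zpow_eq_of_intCast_eq {k l : ℤ} (h : (k : ZMod 2) = l) :
    (-1 : ℂ) ^ k = (-1 : ℂ) ^ l := by
  have heven : Even k ↔ Even l := by
    rw [← ZMod.intCast_eq_zero_iff_even, ← ZMod.intCast_eq_zero_iff_even, h]
  simp only [neg_one_zpow_eq_ite, heven]

section QuadForm

variable {n : ℕ}

def quadForm (S : Matrix (Fin n) (Fin n) ℤ) (v : Fin n → ZMod 2) : ℤ :=
  intVec v ⬝ᵥ S *ᵥ intVec v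

lemma tauR_eq_diagonal (ℓ : ℕ) (R : Matrix (Fin n) (Fin n) ℤ) :
    tauR ℓ R = diagonal fun v => xi ℓ ^ quadForm R v := rfl

lemma add_quadForm (S T : Matrix (Fin n) (Fin n) ℤ) (v : Fin n → ZMod 2) :
    quadForm (S + T) v = quadForm S v + quadForm T v := by
  simp [quadForm, add_mulVec, dotProduct_add]

lemma smul_quadForm (c : ℤ) (S : Matrix (Fin n) (Fin n) ℤ) (v : Fin n → ZMod 2) :
    quadForm (c • S) v = c * quadForm S v := by
  simp only [quadForm, smul_mulVec, dotProduct_smul, smul_eq_mul]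

lemma intVec_add (v a : Fin n → ZMod 2) :
    intVec (v + a) = (fun i => 1 - 2 * intVec a i) * intVec v + intVec a := by
  have : ∀ x y : ZMod 2, ((x + y).val : ℤ) = (1 - 2 * (y.val : ℤ)) * x.val + y.val := by decide
  funext i
  exact this (v i) (a i)

lemma intCast_intVec (v : Fin n → ZMod 2) (i : Fin n) : ((intVec v i : ℤ) : ZMod 2) = v i := by
  simp [intVec]

lemma quadForm_diagonal (β : Fin n → ℤ) (v : Fin n → ZMod 2) :
    quadForm (diagonal β) v = intVec v ⬝ᵥ β := by
  simp only [quadForm, dotProduct, mulVec_diagonal]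
  refine Finset.sum_congr rfl fun i _ => ?_
  linear_combination β i * intVec_mul_self v i

lemma Matrix.IsSymm.intCast_quadForm {S : Matrix (Fin n) (Fin n) ℤ} (hS : S.IsSymm)
    (v : Fin n → ZMod 2) : ((quadForm S v : ℤ) : ZMod 2) = ∑ i, v i * (S i i : ZMod 2) := by
  obtain ⟨y, hy⟩ := hS.exists_dotProduct_mulVec_self_eq (intVec v)
  rw [quadForm, hy]
  simp [intVec_mul_self, intCast_intVec, mul_comm, show (2 : ZMod 2) = 0 from rfl]

/-- On 0/1 vectors `v + a = D v + a` with `D = diag(1 - 2a)`; this matrix is `(D S D - S) / 2`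
plus the diagonal matrix of the cross term `D S a` (see `Matrix.IsSymm.quadForm_add`). -/
def derivMatrix (S : Matrix (Fin n) (Fin n) ℤ) (a : Fin n → ZMod 2) : Matrix (Fin n) (Fin n) ℤ :=
  (of fun i j => S i j * (2 * intVec a i * intVec a j - intVec a i - intVec a j)) +
    diagonal ((fun i => 1 - 2 * intVec a i) * S *ᵥ intVec a)

lemma isSymm_derivMatrix {S : Matrix (Fin n) (Fin n) ℤ} (hS : S.IsSymm)
    (a : Fin n → ZMod 2) : (derivMatrix S a).IsSymm := by
  refine IsSymm.add (IsSymm.ext fun i j => ?_) (isSymm_diagonal _)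
  simp only [of_apply, hS.apply i j]
  ring

lemma Matrix.IsSymm.quadForm_add {S : Matrix (Fin n) (Fin n) ℤ} (hS : S.IsSymm)
    (v a : Fin n → ZMod 2) :
    quadForm S (v + a) = quadForm S v + quadForm S a + 2 * quadForm (derivMatrix S a) v := by
  set x := intVec v
  set α := intVec a
  set d : Fin n → ℤ := fun i => 1 - 2 * α i
  have hquad : (d * x) ⬝ᵥ S *ᵥ (d * x) = x ⬝ᵥ S *ᵥ x +
      2 * (x ⬝ᵥ (of fun i j => S i j * (2 * α i * α j - α i - α j)) *ᵥ x) := by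
    simp only [dotProduct, mulVec, Pi.mul_apply, of_apply, Finset.mul_sum,
      ← Finset.sum_add_distrib]
    refine Finset.sum_congr rfl fun i _ => Finset.sum_congr rfl fun j _ => ?_
    ring
  have hlin : (d * x) ⬝ᵥ S *ᵥ α = x ⬝ᵥ diagonal (d * S *ᵥ α) *ᵥ x := by
    simp only [dotProduct, mulVec_diagonal, Pi.mul_apply]
    refine Finset.sum_congr rfl fun i _ => ?_
    linear_combination -(d i * (S *ᵥ α) i) * intVec_mul_self v i
  rw [quadForm, intVec_add, hS.add_dotProduct_mulVec_add, hquad, hlin, derivMatrix,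
    add_quadForm]
  unfold quadForm
  ring

end QuadForm

section CliffordHierarchy

variable {n : ℕ}

def IsQuadPhase (f : (Fin n → ZMod 2) → ℤ) : Prop :=
  ∃ (m : ℤ) (S : Matrix (Fin n) (Fin n) ℤ), S.IsSymm ∧ ∀ v, f v = m + 2 * quadForm S v

namespace IsQuadPhase

variable {f g : (Fin n → ZMod 2) → ℤ}

lemma add (hf : IsQuadPhase f) (hg : IsQuadPhase g) : IsQuadPhase fun v => f v + g v := by
  obtain ⟨m, S, hS, hf⟩ := hf
  obtain ⟨m', S', hS', hg⟩ := hg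
  exact ⟨m + m', S + S', hS.add hS', fun v => by simp only [hf, hg, add_quadForm]; ring⟩

lemma two_mul (hf : IsQuadPhase f) : IsQuadPhase fun v => 2 * f v := by
  obtain ⟨m, S, hS, hf⟩ := hf
  exact ⟨2 * m, (2 : ℤ) • S, hS.smul 2, fun v => by simp only [hf, smul_quadForm]; ring⟩

lemma exists_add_eq_add_two_mul (hf : IsQuadPhase f) (a : Fin n → ZMod 2) :
    ∃ φ, IsQuadPhase φ ∧ ∀ v, f (v + a) = f v + 2 * φ v := by
  obtain ⟨m, S, hS, hf⟩ := hf
  refine ⟨fun v => quadForm S a + 2 * quadForm (derivMatrix S a) v,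
    ⟨_, _, isSymm_derivMatrix hS a, fun _ => rfl⟩, fun v => ?_⟩
  rw [hf, hf, hS.quadForm_add]
  ring

lemma comp_add_right (hf : IsQuadPhase f) (a : Fin n → ZMod 2) :
    IsQuadPhase fun v => f (v + a) := by
  obtain ⟨φ, hφ, hfφ⟩ := hf.exists_add_eq_add_two_mul a
  simpa only [hfφ] using hf.add hφ.two_mul

end IsQuadPhase

lemma intVec_dotProduct (a b : Fin n → ZMod 2) :
    intVec a ⬝ᵥ intVec b = ((∑ i, (a i).val * (b i).val : ℕ) : ℤ) := by
  simp only [intVec, dotProduct, Nat.cast_sum, Nat.cast_mul]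

lemma PauliE_eq_shiftDiagonal (a b : Fin n → ZMod 2) :
    PauliE a b = shiftDiagonal a fun v =>
      Complex.I ^ ((∑ i, (a i).val * (b i).val) % 4) * (-1 : ℂ) ^ (∑ i, (v i).val * (b i).val) := by
  ext u v
  by_cases h : u = v + a <;> simp [PauliE, shiftDiagonal, h]

lemma exists_isQuadPhase_PauliE_eq (k : ℕ) (a b : Fin n → ZMod 2) :
    ∃ g, IsQuadPhase g ∧ PauliE a b = shiftDiagonal a fun v => xi (k + 2) ^ g v := by
  refine ⟨fun v => 2 ^ k * (intVec a ⬝ᵥ intVec b + 2 * intVec v ⬝ᵥ intVec b),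
    ⟨2 ^ k * intVec a ⬝ᵥ intVec b, (2 ^ k : ℤ) • diagonal (intVec b),
      (isSymm_diagonal _).smul _, fun v => ?_⟩, ?_⟩
  · rw [smul_quadForm, quadForm_diagonal]
    ring
  · rw [PauliE_eq_shiftDiagonal, add_comm k]
    congr 1
    funext v
    rw [xi_add_zpow_two_pow_mul, xi_two, ← Complex.I_pow_eq_pow_mod, zpow_add₀ Complex.I_ne_zero,
      _root_.zpow_mul, zpow_two, Complex.I_mul_I, intVec_dotProduct, intVec_dotProduct,
      zpow_natCast, zpow_natCast]

lemma shiftDiagonal_I_zpow_mem_cliffLevel_one {f : (Fin n → ZMod 2) → ℤ} (hf : IsQuadPhase f)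
    (a : Fin n → ZMod 2) : shiftDiagonal a (fun v => Complex.I ^ f v) ∈ CliffLevel n 1 := by
  obtain ⟨m, S, hS, hf⟩ := hf
  set c : Fin n → ZMod 2 := fun i => (S i i : ZMod 2)
  set ac : ℕ := ∑ i, (a i).val * (c i).val
  obtain ⟨κ, hκ⟩ : ∃ κ : Fin 4, Complex.I ^ (m - ac) = Complex.I ^ (κ : ℕ) :=
    ⟨⟨((m - ac) % 4).toNat, by omega⟩, by
      rw [Complex.I_zpow_eq_zpow_mod, ← zpow_natCast, Int.toNat_of_nonneg (by omega)]⟩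
  refine ⟨κ, a, c, ?_⟩
  rw [PauliE_eq_shiftDiagonal, smul_shiftDiagonal, ← hκ]
  congr 1
  funext v
  have hparity : (-1 : ℂ) ^ quadForm S v = (-1 : ℂ) ^ (∑ i, (v i).val * (c i).val) := by
    rw [← zpow_natCast]
    apply neg_one_zpow_eq_of_intCast_eq
    simp [hS.intCast_quadForm, c]
  rw [hf, zpow_add₀ Complex.I_ne_zero, _root_.zpow_mul, zpow_two, Complex.I_mul_I, hparity,
    ← Complex.I_pow_eq_pow_mod, ← mul_assoc, ← zpow_natCast Complex.I ac,
    ← zpow_add₀ Complex.I_ne_zero, sub_add_cancel]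

lemma exists_shiftDiagonal_xi_conj (ℓ : ℕ) {f g : (Fin n → ZMod 2) → ℤ} (hf : IsQuadPhase f)
    (hg : IsQuadPhase g) (a a' : Fin n → ZMod 2) :
    ∃ h, IsQuadPhase h ∧
      shiftDiagonal a (fun v => xi (ℓ + 1) ^ f v) * shiftDiagonal a' (fun v => xi ℓ ^ g v) *
        (shiftDiagonal a fun v => xi (ℓ + 1) ^ f v)ᴴ = shiftDiagonal a' fun v => xi ℓ ^ h v := by
  obtain ⟨φ, hφ, hfφ⟩ := hf.exists_add_eq_add_two_mul a'
  refine ⟨fun v => φ (v - a) + g (v - a), ?_, ?_⟩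
  · simpa only [sub_eq_add_neg] using (hφ.add hg).comp_add_right (-a)
  · rw [shiftDiagonal_mul_mul_conjTranspose]
    congr 1
    funext v
    rw [hfφ, star_xi_zpow, ← xi_succ_zpow_two_mul ℓ (g _), ← xi_succ_zpow_two_mul ℓ (φ _ + g _),
      ← zpow_add₀ (xi_ne_zero _), ← zpow_add₀ (xi_ne_zero _)]
    ring_nf

theorem shiftDiagonal_xi_mem_cliffLevel (k : ℕ) {f : (Fin n → ZMod 2) → ℤ} (hf : IsQuadPhase f)
    (a : Fin n → ZMod 2) :
    shiftDiagonal a (fun v => xi (k + 2) ^ f v) ∈ CliffLevel n (k + 1) := by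
  induction k generalizing f a with
  | zero => simpa only [zero_add, xi_two] using shiftDiagonal_I_zpow_mem_cliffLevel_one hf a
  | succ k ih =>
    refine ⟨shiftDiagonal_mem_unitary fun v => star_xi_zpow_mul_self _ _, fun a' b' => ?_⟩
    obtain ⟨g, hg, hPauli⟩ := exists_isQuadPhase_PauliE_eq k a' b'
    obtain ⟨h, hh, hconj⟩ := exists_shiftDiagonal_xi_conj (k + 2) hf hg a a'
    rw [hPauli, hconj]
    exact ih hh a'

end CliffordHierarchy

theorem qfd_in_clifford_hierarchy_general (n : ℕ) (ℓ : ℕ) (hℓ : 1 ≤ ℓ)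
    (R : Matrix (Fin n) (Fin n) ℤ) (hR : R.IsSymm) :
    tauR ℓ R ∈ CliffLevel n ℓ := by
  obtain ⟨k, rfl⟩ := Nat.exists_eq_add_of_le' hℓ
  have hτ : tauR (k + 1) R = shiftDiagonal 0 fun v => xi (k + 2) ^ (2 * quadForm R v) := by
    simp only [shiftDiagonal_zero, xi_succ_zpow_two_mul, tauR_eq_diagonal]
  rw [hτ]
  exact shiftDiagonal_xi_mem_cliffLevel k ⟨0, R, hR, fun v => (zero_add _).symm⟩ 0

/-- Every QFD gate `τ_R^{(ℓ)}` (for symmetric integer `R`) lies in the `ℓ`-th level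
of the Clifford hierarchy. -/
theorem qfd_in_clifford_hierarchy (n : ℕ) (hn : 1 ≤ n) (ℓ : ℕ) (hℓ : 1 ≤ ℓ)
    (R : Matrix (Fin n) (Fin n) ℤ) (hR : R.IsSymm) :
    tauR ℓ R ∈ CliffLevel n ℓ :=
  qfd_in_clifford_hierarchy_general n ℓ hℓ R hR

end
end

section
/- Let n ≥ 1, N = 2^n, and a, b ∈ F₂ⁿ. Then conjugation of the Pauli matrix E(a,b) by the transversal T gate satisfies T^{⊗n} E(a,b) (T^{⊗n})† = 2^{−w_H(a)/2} · Σ_{y ⪯ a} (−1)^{b·y} E(a, b ⊕ y), where the sum runs over all y ∈ F₂ⁿ with supp(y) ⊆ supp(a), w_H(a) is the Hamming weight of a, and b·y is the integer dot product of 0/1 representatives. -/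
open Matrix

noncomputable section

/-- Hamming weight of a binary vector. -/
def wHam {n : ℕ} (a : Fin n → ZMod 2) : ℕ := ∑ i, (a i).val

/-- Integer dot product of the 0/1 representatives of two binary vectors. -/
def dotN {n : ℕ} (a b : Fin n → ZMod 2) : ℕ := ∑ i, (a i).val * (b i).val

/-- The transversal `T` gate `T^{⊗n}`: the diagonal matrix with `(v,v)` entry
`e^{iπ w_H(v)/4}`. -/
def transT (n : ℕ) : Matrix (Fin n → ZMod 2) (Fin n → ZMod 2) ℂ :=
  Matrix.diagonal fun v => Complex.exp ((Real.pi : ℂ) * Complex.I / 4) ^ wHam v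

lemma omega_eq : Complex.exp ((Real.pi : ℂ) * Complex.I / 4) = ((Real.sqrt 2 / 2 : ℝ) : ℂ) * (1 + Complex.I) := by
  rw [show ((Real.pi:ℂ) * Complex.I / 4) = ((Real.pi/4 : ℝ):ℂ) * Complex.I by push_cast; ring,
    Complex.exp_mul_I]
  rw [← Complex.ofReal_cos, ← Complex.ofReal_sin, Real.cos_pi_div_four, Real.sin_pi_div_four]
  push_cast; ring

lemma omega_conj : (starRingEnd ℂ) (Complex.exp ((Real.pi : ℂ) * Complex.I / 4)) = ((Real.sqrt 2 / 2 : ℝ) : ℂ) * (1 - Complex.I) := by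
  rw [omega_eq]
  simp only [_root_.map_mul, map_add, RingHom.map_one, Complex.conj_ofReal, Complex.conj_I]
  ring

lemma key (x y z : ZMod 2) :
    Complex.exp ((Real.pi : ℂ) * Complex.I / 4) ^ (z + x).val *
      (starRingEnd ℂ (Complex.exp ((Real.pi : ℂ) * Complex.I / 4))) ^ z.val *
      Complex.I ^ (x.val * y.val) * (-1 : ℂ) ^ (z.val * y.val)
    = ((1 : ℂ) / (Real.sqrt 2 : ℂ)) ^ x.val *
      ∑ c ∈ (if x = 0 then ({0} : Finset (ZMod 2)) else Finset.univ),
        ((-1 : ℂ) ^ (y.val * c.val) * (Complex.I ^ (x.val * (y + c).val) *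
          (-1 : ℂ) ^ (z.val * (y + c).val))) := by
  have hs : ((Real.sqrt 2 : ℝ) : ℂ) * ((Real.sqrt 2 : ℝ) : ℂ) = 2 := by
    rw [← Complex.ofReal_mul, Real.mul_self_sqrt (by norm_num)]; norm_num
  have hs0 : ((Real.sqrt 2 : ℝ) : ℂ) ≠ 0 := by
    simpa using (Real.sqrt_ne_zero'.mpr (by norm_num : (0:ℝ) < 2))
  have huniv : (Finset.univ : Finset (ZMod 2)) = {0, 1} := by decide
  have h2 : ∀ w : ZMod 2, w = 0 ∨ w = 1 := by decide
  rw [omega_conj, omega_eq]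
  rcases h2 x with hx | hx <;> rcases h2 y with hy | hy <;> rcases h2 z with hz | hz <;>
    subst hx hy hz <;>
    simp only [huniv, Finset.sum_pair (by decide : (0:ZMod 2) ≠ 1), Finset.sum_singleton,
      reduceIte, show ((0:ZMod 2)+0) = 0 from rfl, show ((0:ZMod 2)+1) = 1 from rfl,
      show ((1:ZMod 2)+0) = 1 from rfl, show ((1:ZMod 2)+1) = 0 from rfl,
      show ZMod.val (0 : ZMod 2) = 0 from rfl, show ZMod.val (1 : ZMod 2) = 1 from rfl,
      pow_zero, pow_one, mul_one, one_mul, Nat.mul_zero, Nat.zero_mul, Nat.mul_one, Nat.one_mul] <;>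
    (try simp only [show ((1:ZMod 2)+1).val = 0 by decide, show ZMod.val (1:ZMod 2) = 1 by decide,
      pow_zero, pow_one, mul_one, one_mul]) <;>
    (try norm_num [ZMod.val_one, show ZMod.val (2 : ZMod 2) = 0 by decide]) <;> push_cast <;> field_simp
  all_goals first
    | ring1
    | (left; linear_combination hs)
    | linear_combination ((1:ℂ) - Complex.I^2)*hs - 2*Complex.I_sq
    | linear_combination ((1:ℂ)+Complex.I)*hs
    | linear_combination ((1:ℂ)-Complex.I)*hs
    | linear_combination (Complex.I + Complex.I^2)*hs + 2*Complex.I_sq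
    | linear_combination (Complex.I^2 - Complex.I)*hs + 2*Complex.I_sq

lemma I_pow_mod (m : ℕ) : Complex.I ^ (m % 4) = Complex.I ^ m :=
  (pow_eq_pow_mod m (by norm_num [pow_succ, Complex.I_sq])).symm

/-- Conjugation of a Pauli matrix by the transversal `T` gate:
`T^{⊗n} E(a,b) (T^{⊗n})† = 2^{−w_H(a)/2} Σ_{y ⪯ a} (−1)^{b·y} E(a, b ⊕ y)`. -/
theorem transversal_T_conjugation (n : ℕ) (hn : 1 ≤ n) (a b : Fin n → ZMod 2) :
    transT n * PauliE a b * (transT n)ᴴ =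
      ((1 : ℂ) / (Real.sqrt 2 : ℂ)) ^ wHam a •
        ∑ y ∈ Finset.univ.filter (fun y : Fin n → ZMod 2 => ∀ i, a i = 0 → y i = 0),
          ((-1 : ℂ) ^ dotN b y) • PauliE a (b + y) := by
  have hfilt : Finset.univ.filter (fun y : Fin n → ZMod 2 => ∀ i, a i = 0 → y i = 0)
      = Fintype.piFinset (fun i => if a i = 0 then ({0} : Finset (ZMod 2)) else Finset.univ) := by
    ext y
    simp only [Finset.mem_filter, Finset.mem_univ, true_and, Fintype.mem_piFinset]
    refine forall_congr' fun i => ?_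
    split <;> simp [*]
  ext u v
  rw [transT, Matrix.diagonal_conjTranspose, Matrix.mul_diagonal, Matrix.diagonal_mul]
  simp only [Matrix.smul_apply, Matrix.sum_apply, Matrix.smul_apply, smul_eq_mul, Pi.star_apply,
    PauliE, Matrix.of_apply]
  by_cases h : u = v + a
  · subst h
    simp only [if_pos rfl, if_true, mul_one, hfilt, star_pow, Complex.star_def]
    simp only [I_pow_mod, wHam, dotN, Pi.add_apply]
    simp only [← Finset.prod_pow_eq_pow_sum]
    simp only [← Finset.prod_mul_distrib]
    rw [← Finset.prod_univ_sum (fun i => if a i = 0 then ({0} : Finset (ZMod 2)) else Finset.univ)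
      (fun i c => (-1:ℂ) ^ ((b i).val * c.val) *
        (Complex.I ^ ((a i).val * (b i + c).val) * (-1:ℂ) ^ ((v i).val * (b i + c).val)))]
    simp only [← Finset.prod_mul_distrib]
    refine Finset.prod_congr rfl fun i _ => ?_
    linear_combination key (a i) (b i) (v i)
  · simp [if_neg h]

end
end

section
/- Let n be even and let C ⊆ F₂ⁿ be a linear code of dimension k ≥ n/2 in which every codeword has even Hamming weight. Then the following are equivalent: (1) C contains its dual code C^⊥ = { y ∈ F₂ⁿ : x·y ≡ 0 (mod 2) for all x ∈ C }; (2) C contains a self-dual subcode, i.e. a linear subspace C_s ⊆ C with dim C_s = n/2 such that x·y ≡ 0 (mod 2) for all x, y ∈ C_s; (3) every y ∈ F₂ⁿ with y ∉ C satisfies |{ x ∈ C : x·y ≡ 0 (mod 2) }| = |{ x ∈ C : x·y ≡ 1 (mod 2) }|. -/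
/-!
Work with the dot product `B` on `F₂ⁿ`, which is nondegenerate; even weight says `B x x = 0` on
`C`. A self-dual `W ≤ C` gives `C^⊥ ≤ W^⊥ = W ≤ C`. Conversely, if `C^⊥ ≤ C`, a maximal
`B`-isotropic subspace `W` with `C^⊥ ≤ W ≤ C` is self-dual: any `v ∈ W^⊥ \ W` lies in
`W^⊥ ≤ C^⊥⊥ = C`, so is isotropic and enlarges `W`. For the counting, if `y ∉ C^⊥` some codeword
`x₀` has `x₀ · y = 1`, and translation by `x₀` swaps the two halves of `C`; if `y ∈ C^⊥ \ C`,
no codeword is non-orthogonal to `y`.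
-/

noncomputable section

open Module

theorem AddSubgroup.ncard_setOf_eq_zero_eq_ncard_setOf_eq_one {G : Type*} [AddCommGroup G]
    (C : AddSubgroup G) (φ : G →+ ZMod 2) {x₀ : G} (hx₀ : x₀ ∈ C) (hφ : φ x₀ = 1) :
    {x | x ∈ C ∧ φ x = 0}.ncard = {x | x ∈ C ∧ φ x = 1}.ncard := by
  have : (· + x₀) '' {x | x ∈ C ∧ φ x = 0} = {x | x ∈ C ∧ φ x = 1} := by
    ext z
    simp only [Set.image_add_right, Set.mem_preimage, Set.mem_ofPred_eq,
      add_mem_cancel_right (neg_mem hx₀), map_add, map_neg, hφ, add_neg_eq_zero]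
  rw [← this, Set.ncard_image_of_injective _ (add_left_injective x₀)]

theorem ZMod.ne_zero_iff_eq_one {a : ZMod 2} : a ≠ 0 ↔ a = 1 := by decide +revert

namespace LinearMap.BilinForm

section CommRing

variable {R M : Type*} [CommRing R] [AddCommGroup M] [Module R M] {B : LinearMap.BilinForm R M}

theorem le_orthogonal_comm (hB : B.IsRefl) {N L : Submodule R M} :
    N ≤ B.orthogonal L ↔ L ≤ B.orthogonal N :=
  ⟨fun h _ hl _ hn => hB _ _ (h hn _ hl), fun h _ hn _ hl => hB _ _ (h hl _ hn)⟩

theorem orthogonal_sup (N L : Submodule R M) :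
    B.orthogonal (N ⊔ L) = B.orthogonal N ⊓ B.orthogonal L := by
  refine le_antisymm (le_inf (orthogonal_le le_sup_left) (orthogonal_le le_sup_right)) ?_
  rintro m ⟨hN, hL⟩
  have : N ⊔ L ≤ LinearMap.ker (B.flip m) := sup_le hN hL
  exact fun x hx => this hx

theorem span_singleton_le_orthogonal_self {v : M} (hv : B v v = 0) :
    R ∙ v ≤ B.orthogonal (R ∙ v) := by
  rw [Submodule.span_singleton_le_iff_mem, mem_orthogonal_iff]
  intro w hw
  obtain ⟨c, rfl⟩ := Submodule.mem_span_singleton.mp hw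
  simp [hv]

theorem sup_span_singleton_le_orthogonal (hB : B.IsRefl) {W : Submodule R M}
    (hW : W ≤ B.orthogonal W) {v : M} (hvW : v ∈ B.orthogonal W) (hv : B v v = 0) :
    W ⊔ R ∙ v ≤ B.orthogonal (W ⊔ R ∙ v) := by
  have hvW' : R ∙ v ≤ B.orthogonal W := (Submodule.span_singleton_le_iff_mem _ _).mpr hvW
  rw [orthogonal_sup]
  exact sup_le (le_inf hW ((le_orthogonal_comm hB).mpr hvW'))
    (le_inf hvW' (span_singleton_le_orthogonal_self hv))

end CommRing

section Field

variable {K V : Type*} [Field K] [AddCommGroup V] [Module K V] [FiniteDimensional K V]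
  {B : LinearMap.BilinForm K V}

theorem orthogonal_eq_self_iff (hB : B.Nondegenerate) {W : Submodule K V} :
    B.orthogonal W = W ↔ W ≤ B.orthogonal W ∧ 2 * finrank K W = finrank K V := by
  have hdim := finrank_orthogonal hB W
  have hle := W.finrank_le
  constructor
  · intro h
    rw [h] at hdim
    exact ⟨h.ge, by omega⟩
  · rintro ⟨hW, h⟩
    exact (Submodule.eq_of_le_of_finrank_le hW (by omega)).symm

theorem exists_orthogonal_eq_self_of_orthogonal_le (hB : B.Nondegenerate) (hBr : B.IsRefl)
    {C : Submodule K V} (hC : B.orthogonal C ≤ C) (hiso : ∀ x ∈ C, B x x = 0) :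
    ∃ W ≤ C, B.orthogonal W = W := by
  let S : Set (Submodule K V) :=
    {W | B.orthogonal C ≤ W ∧ W ≤ C ∧ W ≤ B.orthogonal W}
  have hS : B.orthogonal C ∈ S :=
    ⟨le_rfl, hC, by rwa [orthogonal_orthogonal hB hBr]⟩
  obtain ⟨W, ⟨hCW, hWC, hW⟩, hmax⟩ := wellFounded_gt.has_min S ⟨_, hS⟩
  refine ⟨W, hWC, le_antisymm ?_ hW⟩
  intro v hv
  by_contra hvW
  have hvC : v ∈ C := by
    rw [← orthogonal_orthogonal hB hBr C]
    exact orthogonal_le hCW hv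
  refine hmax (W ⊔ K ∙ v) ⟨le_sup_of_le_left hCW,
    sup_le hWC ((Submodule.span_singleton_le_iff_mem _ _).mpr hvC),
    sup_span_singleton_le_orthogonal hBr hW hv (hiso v hvC)⟩ ?_
  exact lt_of_le_of_ne le_sup_left fun h =>
    hvW (h ▸ Submodule.mem_sup_right (Submodule.mem_span_singleton_self v))

theorem orthogonal_le_iff_exists_orthogonal_eq_self (hB : B.Nondegenerate) (hBr : B.IsRefl)
    {C : Submodule K V} (hiso : ∀ x ∈ C, B x x = 0) :
    B.orthogonal C ≤ C ↔ ∃ W ≤ C, B.orthogonal W = W := by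
  refine ⟨fun hC => exists_orthogonal_eq_self_of_orthogonal_le hB hBr hC hiso, ?_⟩
  rintro ⟨W, hWC, hW⟩
  calc B.orthogonal C ≤ B.orthogonal W := orthogonal_le hWC
    _ = W := hW
    _ ≤ C := hWC

end Field

section ZModTwo

variable {M : Type*} [AddCommGroup M] [Module (ZMod 2) M] {B : LinearMap.BilinForm (ZMod 2) M}

theorem orthogonal_le_iff_forall_ncard_eq [Finite M] (C : Submodule (ZMod 2) M) :
    B.orthogonal C ≤ C ↔ ∀ y ∉ C,
      {x | x ∈ C ∧ B x y = 0}.ncard = {x | x ∈ C ∧ B x y ≠ 0}.ncard := by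
  simp only [ZMod.ne_zero_iff_eq_one]
  constructor
  · intro hC y hyC
    obtain ⟨x₀, hx₀, hx₀y⟩ : ∃ x₀ ∈ C, B x₀ y ≠ 0 := by
      by_contra! h
      exact hyC (hC (mem_orthogonal_iff.mpr h))
    exact C.toAddSubgroup.ncard_setOf_eq_zero_eq_ncard_setOf_eq_one (B.flip y).toAddMonoidHom hx₀
      ((ZMod.ne_zero_iff_eq_one).mp hx₀y)
  · intro h y hy
    by_contra hyC
    have hempty : {x | x ∈ C ∧ B x y = 1} = ∅ := by
      ext x
      simp +contextual [mem_orthogonal_iff.mp hy x]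
    have hzero : (0 : M) ∈ {x | x ∈ C ∧ B x y = 0} := ⟨C.zero_mem, by simp⟩
    have hcard := h y hyC
    rw [hempty, Set.ncard_empty, Set.ncard_eq_zero (Set.toFinite _)] at hcard
    exact (hcard ▸ hzero : (0 : M) ∈ (∅ : Set M))

end ZModTwo

end LinearMap.BilinForm

section DotProduct

variable {R ι : Type*} [CommRing R] [Fintype ι]

theorem dotProductBilin_isRefl : (dotProductBilin R R : LinearMap.BilinForm R (ι → R)).IsRefl :=
  fun x y h => by
    rwa [dotProductBilin_apply_apply, dotProduct_comm, ← dotProductBilin_apply_apply R R]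

theorem dotProductBilin_nondegenerate :
    (dotProductBilin R R : LinearMap.BilinForm R (ι → R)).Nondegenerate := by
  classical
  refine (LinearMap.IsRefl.nondegenerate_iff_separatingLeft dotProductBilin_isRefl).mpr ?_
  intro x hx
  funext i
  simpa using hx (Pi.single i 1)

end DotProduct

theorem natCast_dotN {n : ℕ} (x y : Fin n → ZMod 2) : (dotN x y : ZMod 2) = x ⬝ᵥ y := by
  simp [dotN, dotProduct]

theorem two_dvd_dotN_iff {n : ℕ} {x y : Fin n → ZMod 2} : 2 ∣ dotN x y ↔ x ⬝ᵥ y = 0 := by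
  rw [← natCast_dotN, ZMod.natCast_eq_zero_iff]

theorem even_wHam_iff {n : ℕ} {x : Fin n → ZMod 2} : Even (wHam x) ↔ x ⬝ᵥ x = 0 := by
  have : (wHam x : ZMod 2) = x ⬝ᵥ x := by
    have hidem : ∀ a : ZMod 2, a * a = a := by decide
    simp [wHam, dotProduct, hidem]
  rw [even_iff_two_dvd, ← ZMod.natCast_eq_zero_iff, this]

open LinearMap.BilinForm in
theorem even_code_selfdual_tfae_general (n : ℕ)
    (C : Submodule (ZMod 2) (Fin n → ZMod 2))
    (heven : ∀ x ∈ C, Even (wHam x)) :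
    ((∀ y : Fin n → ZMod 2, (∀ x ∈ C, 2 ∣ dotN x y) → y ∈ C) ↔
      (∃ Cs : Submodule (ZMod 2) (Fin n → ZMod 2), Cs ≤ C ∧
        2 * Module.finrank (ZMod 2) Cs = n ∧
        ∀ x ∈ Cs, ∀ y ∈ Cs, 2 ∣ dotN x y)) ∧
    ((∃ Cs : Submodule (ZMod 2) (Fin n → ZMod 2), Cs ≤ C ∧
        2 * Module.finrank (ZMod 2) Cs = n ∧
        ∀ x ∈ Cs, ∀ y ∈ Cs, 2 ∣ dotN x y) ↔
      (∀ y : Fin n → ZMod 2, y ∉ C →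
        {x : Fin n → ZMod 2 | x ∈ C ∧ 2 ∣ dotN x y}.ncard =
          {x : Fin n → ZMod 2 | x ∈ C ∧ ¬ 2 ∣ dotN x y}.ncard)) := by
  let B : LinearMap.BilinForm (ZMod 2) (Fin n → ZMod 2) := dotProductBilin (ZMod 2) (ZMod 2)
  have hB : B.Nondegenerate := dotProductBilin_nondegenerate
  have hiso : ∀ x ∈ C, B x x = 0 := fun x hx => even_wHam_iff.mp (heven x hx)
  have h1 : (∀ y, (∀ x ∈ C, 2 ∣ dotN x y) → y ∈ C) ↔ B.orthogonal C ≤ C := by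
    simp [SetLike.le_def, mem_orthogonal_iff, two_dvd_dotN_iff, B]
  have h2 : (∃ Cs : Submodule (ZMod 2) (Fin n → ZMod 2), Cs ≤ C ∧ 2 * finrank (ZMod 2) Cs = n ∧
      ∀ x ∈ Cs, ∀ y ∈ Cs, 2 ∣ dotN x y) ↔ ∃ W ≤ C, B.orthogonal W = W := by
    refine exists_congr fun W => and_congr_right fun _ => ?_
    rw [orthogonal_eq_self_iff hB, finrank_fin_fun, and_comm]
    simp only [SetLike.le_def, mem_orthogonal_iff, two_dvd_dotN_iff, B, dotProductBilin_apply_apply]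
    exact and_congr_left fun _ => forall₂_comm
  have h3 : (∀ y, y ∉ C →
      {x | x ∈ C ∧ 2 ∣ dotN x y}.ncard = {x | x ∈ C ∧ ¬ 2 ∣ dotN x y}.ncard) ↔
      ∀ y ∉ C, {x | x ∈ C ∧ B x y = 0}.ncard = {x | x ∈ C ∧ B x y ≠ 0}.ncard := by
    simp [two_dvd_dotN_iff, B]
  have h12 := orthogonal_le_iff_exists_orthogonal_eq_self hB dotProductBilin_isRefl hiso
  rw [h1, h2, h3]
  exact ⟨h12, h12.symm.trans (orthogonal_le_iff_forall_ncard_eq C)⟩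

/-- For an even-weight binary linear code `C ⊆ F₂ⁿ` of dimension `k ≥ n/2` (with `n`
even), the following are equivalent: (1) `C` contains its dual; (2) `C` contains a
self-dual subcode of dimension `n/2`; (3) every `y ∉ C` is orthogonal to exactly half
of the codewords of `C`. -/
theorem even_code_selfdual_tfae (n : ℕ) (hn : Even n)
    (C : Submodule (ZMod 2) (Fin n → ZMod 2))
    (hk : n ≤ 2 * Module.finrank (ZMod 2) C)
    (heven : ∀ x ∈ C, Even (wHam x)) :
    ((∀ y : Fin n → ZMod 2, (∀ x ∈ C, 2 ∣ dotN x y) → y ∈ C) ↔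
      (∃ Cs : Submodule (ZMod 2) (Fin n → ZMod 2), Cs ≤ C ∧
        2 * Module.finrank (ZMod 2) Cs = n ∧
        ∀ x ∈ Cs, ∀ y ∈ Cs, 2 ∣ dotN x y)) ∧
    ((∃ Cs : Submodule (ZMod 2) (Fin n → ZMod 2), Cs ≤ C ∧
        2 * Module.finrank (ZMod 2) Cs = n ∧
        ∀ x ∈ Cs, ∀ y ∈ Cs, 2 ∣ dotN x y) ↔
      (∀ y : Fin n → ZMod 2, y ∉ C →
        {x : Fin n → ZMod 2 | x ∈ C ∧ 2 ∣ dotN x y}.ncard =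
          {x : Fin n → ZMod 2 | x ∈ C ∧ ¬ 2 ∣ dotN x y}.ncard)) :=
  even_code_selfdual_tfae_general n C heven

end
end
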